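/- arXiv:1502.06152 — 8 statements merged into one kernel-verified Lean document; each statement's English description precedes it below -/
import Mathlib

section
/- Let D be a commutative integral domain, n ≥ 1, and s = s_0, s_{-1}, …, s_{1-n} a sequence over D. Suppose g_1 is a nonzero annihilating polynomial of s, and a ∈ D is such that g_1 is NOT an annihilating polynomial of the extended sequence t = s_0, …, s_{1-n}, a. Then every nonzero annihilating polynomial h_1 of t satisfies deg h_1 ≥ n + 1 − deg g_1. -/
open Polynomial in
/-- φ of degree d satisfies the annihilating condition for the length-`n` sequence
`s₀, s₋₁, …, s₁₋ₙ` (where `s k` denotes `s₋ₖ`). -/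
def AnnCond {D : Type*} [CommRing D] (n : ℕ) (s : ℕ → D) (φ : Polynomial D) : Prop :=
  ∀ t : ℕ, t + φ.natDegree + 1 ≤ n →
    ∑ j ∈ Finset.range (φ.natDegree + 1), φ.coeff j * s (t + j) = 0

/-- φ is a nonzero annihilating polynomial of the length-`n` sequence `s`. -/
def Annihilates {D : Type*} [CommRing D] (n : ℕ) (s : ℕ → D) (φ : Polynomial D) : Prop :=
  φ ≠ 0 ∧ AnnCond n s φ

/-- Linear complexity: minimal degree of a nonzero annihilating polynomial. -/
noncomputable def LC {D : Type*} [CommRing D] (n : ℕ) (s : ℕ → D) : ℕ :=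
  sInf {d | ∃ φ : Polynomial D, Annihilates n s φ ∧ φ.natDegree = d}

/-- `x·ψ = [φ·s̄]`, the strictly-positive-degree part of `φ·s̄`, expressed coefficientwise. -/
def SeqNum {D : Type*} [CommRing D] (n : ℕ) (s : ℕ → D) (φ ψ : Polynomial D) : Prop :=
  ∀ k : ℕ, ψ.coeff k = ∑ j ∈ Finset.range (φ.natDegree + 1),
    if k + 1 ≤ j ∧ j - (k + 1) < n then φ.coeff j * s (j - (k + 1)) else 0

/-- `(φ, ψ)` is a solution for the length-`n` sequence `s`. -/
def IsSolution {D : Type*} [CommRing D] (n : ℕ) (s : ℕ → D) (φ ψ : Polynomial D) : Prop :=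
  Annihilates n s φ ∧ SeqNum n s φ ψ

/-- Key Lemma: if `g₁` annihilates `s` of length `n` but not the extension `t = s, a`,
then every nonzero annihilating polynomial `h₁` of `t` satisfies `deg h₁ ≥ n + 1 − deg g₁`. -/
theorem degree_lower_bound_of_not_annihilates_extension
    {D : Type*} [CommRing D] [IsDomain D] (n : ℕ) (hn : 1 ≤ n)
    (s : ℕ → D) (a : D) (g₁ : Polynomial D) (hg : Annihilates n s g₁)
    (t : ℕ → D) (ht : ∀ k < n, t k = s k) (hta : t n = a)
    (hgt : ¬ Annihilates (n + 1) t g₁) :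
    ∀ h₁ : Polynomial D, Annihilates (n + 1) t h₁ →
      n + 1 ≤ h₁.natDegree + g₁.natDegree := by
  intro h₁ hh
  obtain ⟨hg0, hgann⟩ := hg
  obtain ⟨hh0, hhann⟩ := hh
  by_contra hlt
  push_neg at hlt
  set dg := g₁.natDegree with hdg
  set dh := h₁.natDegree with hdh
  have hdgdh : dh + dg ≤ n := by omega
  have hgt' : ¬ AnnCond (n+1) t g₁ := fun h => hgt ⟨hg0, h⟩
  unfold AnnCond at hgt'
  push_neg at hgt'
  obtain ⟨u, hu, hne⟩ := hgt'
  have hkey : u + dg = n := by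
    by_contra h
    have hun : u + dg + 1 ≤ n := by omega
    apply hne
    have h0 := hgann u hun
    rw [← h0]
    apply Finset.sum_congr rfl
    intro j hj
    rw [Finset.mem_range] at hj
    rw [ht (u + j) (by omega)]
  set c := ∑ j ∈ Finset.range (dg + 1), g₁.coeff j * t (u + j) with hc
  set m := n - dg - dh with hm
  have hm1 : m + dg + dh = n := by omega
  have S1 : ∑ i ∈ Finset.range (dg+1), g₁.coeff i *
      (∑ j ∈ Finset.range (dh+1), h₁.coeff j * t (m + i + j)) = 0 := by
    apply Finset.sum_eq_zero
    intro i hi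
    rw [Finset.mem_range] at hi
    rw [hhann (m + i) (by omega), mul_zero]
  have S2 : ∑ j ∈ Finset.range (dh+1), h₁.coeff j *
      (∑ i ∈ Finset.range (dg+1), g₁.coeff i * t (m + j + i)) = h₁.coeff dh * c := by
    rw [Finset.sum_range_succ]
    have hz : ∀ j ∈ Finset.range dh, h₁.coeff j *
        (∑ i ∈ Finset.range (dg+1), g₁.coeff i * t (m + j + i)) = 0 := by
      intro j hj
      rw [Finset.mem_range] at hj
      have hinner : ∑ i ∈ Finset.range (dg+1), g₁.coeff i * t (m + j + i) = 0 := by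
        have h0 := hgann (m + j) (by omega)
        rw [← h0]
        apply Finset.sum_congr rfl
        intro i hi
        rw [Finset.mem_range] at hi
        rw [ht (m + j + i) (by omega)]
      rw [hinner, mul_zero]
    rw [Finset.sum_eq_zero hz, zero_add]
    congr 1
    rw [hc]
    apply Finset.sum_congr rfl
    intro i _
    congr 2
    omega
  have heq : ∑ i ∈ Finset.range (dg+1), g₁.coeff i *
      (∑ j ∈ Finset.range (dh+1), h₁.coeff j * t (m + i + j)) =
      ∑ j ∈ Finset.range (dh+1), h₁.coeff j *
      (∑ i ∈ Finset.range (dg+1), g₁.coeff i * t (m + j + i)) := by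
    simp_rw [Finset.mul_sum]
    rw [Finset.sum_comm]
    apply Finset.sum_congr rfl; intro j _
    apply Finset.sum_congr rfl; intro i _
    have harg : m + i + j = m + j + i := by omega
    rw [harg]; ring
  have hzero : h₁.coeff dh * c = 0 := by rw [← S2, ← heq, S1]
  rcases mul_eq_zero.mp hzero with h | h
  · exact hh0 (Polynomial.leadingCoeff_eq_zero.mp h)
  · exact hne h
end

section
/- Let F be a field, n ≥ 1, S an infinite sequence over F, and s = S|n = S_0,…,S_{1-n}. Let f_1 ∈ F[x] be nonzero with deg f_1 ≤ n, and set x f_2 = [f_1 · S̄] (the strictly positive-degree part of f_1·S̄). Then [f_1 · S̄] = [f_1 · s̄], and (f_1, f_2) is a solution for s (i.e., f_1 annihilates s with x f_2 = [f_1 · s̄]) if and only if v(f_1 · S̄ − x f_2) ≤ deg f_1 − n, where v is the exponential valuation on F((x^{-1})) (v(L) is the largest index with nonzero coefficient, v(0) = −∞). -/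
open Polynomial HahnSeries in
/-- Polynomial part of a Laurent series in `x⁻¹` (the series variable is `x⁻¹`,
so the coefficient of `xᵏ` is the coefficient at exponent `-k`). -/
noncomputable def polPart {F : Type*} [Field F] (L : LaurentSeries F) : Polynomial F :=
  ∑ k ∈ Finset.range ((-L.order).toNat + 1), Polynomial.C (L.coeff (-(k : ℤ))) * Polynomial.X ^ k

/-- Embedding of polynomials in `x` into Laurent series in `x⁻¹`. -/
noncomputable def toL {F : Type*} [Field F] (p : Polynomial F) : LaurentSeries F :=
  ∑ k ∈ Finset.range (p.natDegree + 1), HahnSeries.single (-(k : ℤ)) (p.coeff k)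

/-- Generating function `S̄ = Σ_{i ≤ 0} S_i xⁱ` of an infinite sequence
(`S k` denotes `S₋ₖ`), as a Laurent series in `x⁻¹`. -/
noncomputable def sbar {F : Type*} [Field F] (S : ℕ → F) : LaurentSeries F :=
  HahnSeries.ofPowerSeries ℤ F (PowerSeries.mk S)

/-- The remainders `b_i` of the continued-fraction algorithm for `S̄` (junk `0` after it stops). -/
noncomputable def cfB {F : Type*} [Field F] (S : ℕ → F) : ℕ → LaurentSeries F
  | 0 => HahnSeries.single 1 1 * sbar S
  | (i + 1) => (cfB S i)⁻¹ - toL (polPart (cfB S i)⁻¹)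

/-- `cfA S i` is the partial-quotient polynomial `a_{i+1}`. -/
noncomputable def cfA {F : Type*} [Field F] (S : ℕ → F) (i : ℕ) : Polynomial F :=
  polPart (cfB S i)⁻¹

/-- `cfQ S i = (q^{(i-1)}, q^{(i)})`, the consecutive partial quotients of `S̄`,
with `q^{(-1)} = (0,1)`, `q^{(0)} = (1,0)`, `q^{(i+1)} = a_{i+1} q^{(i)} + q^{(i-1)}`. -/
noncomputable def cfQ {F : Type*} [Field F] (S : ℕ → F) :
    ℕ → (Polynomial F × Polynomial F) × (Polynomial F × Polynomial F)
  | 0 => ((0, 1), (1, 0))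
  | (i + 1) => ((cfQ S i).2,
      (cfA S i * (cfQ S i).2.1 + (cfQ S i).1.1,
       cfA S i * (cfQ S i).2.2 + (cfQ S i).1.2))

/-- `vLE L m` : the exponential valuation of `L` (largest `x`-degree) is `≤ m`. -/
def vLE {F : Type*} [Field F] (L : LaurentSeries F) (m : ℤ) : Prop :=
  ∀ i : ℤ, m < i → L.coeff (-i) = 0

/-- `IsPosPart L g` : `x·g = [L]`, the strictly-positive `x`-degree part of `L`. -/
def IsPosPart {F : Type*} [Field F] (L : LaurentSeries F) (g : Polynomial F) : Prop :=
  ∀ k : ℕ, g.coeff k = L.coeff (-(k + 1 : ℤ))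
/-!
Multiplying `S̄` by `f₁` mixes at most `deg f₁ + 1 ≤ n + 1` consecutive terms, so the coefficient of
`x^(k+1)` in `f₁·S̄` only involves `S₀, …, S₁₋ₙ`; this gives `[f₁·S̄] = [f₁·s̄]` and identifies `f₂`
as the numerator of a solution. Subtracting `x f₂` leaves the power-series part of `f₁·S̄`, whose
coefficient of `x^(-t)` is `Σⱼ f₁ⱼ S₋₍ₜ₊ⱼ₎`, and the valuation bound says precisely that these
vanish for `t + deg f₁ < n`, which is the annihilation condition.
-/

open Polynomial

section

variable {F : Type*} [Field F]

lemma coeff_sbar (S : ℕ → F) (e : ℤ) : (sbar S).coeff e = if e < 0 then 0 else S e.natAbs := by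
  simp [sbar, PowerSeries.coeff_coe]

lemma coeff_sbar_natCast (S : ℕ → F) (t : ℕ) : (sbar S).coeff t = S t := by
  simp [coeff_sbar]

lemma coeff_toL (p : F[X]) (e : ℤ) : (toL p).coeff e = if e ≤ 0 then p.coeff e.natAbs else 0 := by
  rw [toL, HahnSeries.coeff_sum]
  simp only [HahnSeries.coeff_single]
  split_ifs with he
  · have hk (k : ℕ) : e = -(k : ℤ) ↔ e.natAbs = k := by omega
    simp only [hk, Finset.sum_ite_eq, Finset.mem_range, Nat.lt_succ_iff]
    split_ifs with hdeg
    · rfl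
    · exact (coeff_eq_zero_of_natDegree_lt (not_le.1 hdeg)).symm
  · exact Finset.sum_eq_zero fun k _ => if_neg (by omega)

lemma coeff_toL_mul (p : F[X]) (L : LaurentSeries F) (e : ℤ) :
    (toL p * L).coeff e = ∑ k ∈ Finset.range (p.natDegree + 1), p.coeff k * L.coeff (e + k) := by
  rw [toL, Finset.sum_mul, HahnSeries.coeff_sum]
  refine Finset.sum_congr rfl fun k _ => ?_
  simpa using HahnSeries.coeff_single_mul_add (r := p.coeff k) (x := L) (a := e + k) (b := -(k : ℤ))

lemma coeff_toL_mul_sbar_natCast (p : F[X]) (S : ℕ → F) (t : ℕ) :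
    (toL p * sbar S).coeff t = ∑ j ∈ Finset.range (p.natDegree + 1), p.coeff j * S (t + j) := by
  simp only [coeff_toL_mul, ← Nat.cast_add, coeff_sbar_natCast]

lemma coeff_sbar_truncate (S : ℕ → F) {n : ℕ} {e : ℤ} (he : e < n) :
    (sbar fun k => if k < n then S k else 0).coeff e = (sbar S).coeff e := by
  simp only [coeff_sbar]
  split_ifs <;> first | rfl | omega

lemma isPosPart_truncate {p g : F[X]} {S : ℕ → F} {n : ℕ} (hdeg : p.natDegree ≤ n)
    (h : IsPosPart (toL p * sbar S) g) :
    IsPosPart (toL p * sbar fun k => if k < n then S k else 0) g := by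
  intro k
  rw [h k, coeff_toL_mul, coeff_toL_mul]
  refine Finset.sum_congr rfl fun j hj => ?_
  rw [coeff_sbar_truncate S (by simp at hj; omega)]

lemma seqNum_of_isPosPart {p g : F[X]} {S : ℕ → F} {n : ℕ} (hdeg : p.natDegree ≤ n)
    (h : IsPosPart (toL p * sbar S) g) : SeqNum n S p g := by
  intro k
  rw [h k, coeff_toL_mul]
  refine Finset.sum_congr rfl fun j hj => ?_
  rw [Finset.mem_range] at hj
  rw [coeff_sbar]
  split_ifs
  · omega
  · rw [mul_zero]
  · congr 2
    omega
  · omega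

lemma coeff_sub_toL_X_mul_of_neg {L : LaurentSeries F} {g : F[X]} (h : IsPosPart L g) {e : ℤ}
    (he : e < 0) : (L - toL (X * g)).coeff e = 0 := by
  obtain ⟨k, rfl⟩ : ∃ k : ℕ, e = -(k + 1 : ℤ) := ⟨e.natAbs - 1, by omega⟩
  rw [HahnSeries.coeff_sub, coeff_toL, if_pos he.le, show (-(k + 1 : ℤ)).natAbs = k + 1 by omega,
    coeff_X_mul, h k, sub_self]

lemma coeff_sub_toL_X_mul_natCast (L : LaurentSeries F) (g : F[X]) (t : ℕ) :
    (L - toL (X * g)).coeff t = L.coeff t := by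
  rw [HahnSeries.coeff_sub, coeff_toL]
  split_ifs with ht
  · rw [show (t : ℤ).natAbs = 0 by omega, mul_coeff_zero, coeff_X_zero, zero_mul, sub_zero]
  · rw [sub_zero]

lemma vLE_iff_of_coeff_neg {L : LaurentSeries F} (m : ℤ) (h : ∀ e < 0, L.coeff e = 0) :
    vLE L m ↔ ∀ t : ℕ, m < -t → L.coeff t = 0 := by
  refine ⟨fun hv t ht => by simpa using hv (-t) ht, fun hv i hi => ?_⟩
  rcases le_or_gt i 0 with hi0 | hi0
  · obtain ⟨t, rfl⟩ := Int.exists_eq_neg_ofNat hi0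
    simpa using hv t hi
  · exact h _ (by omega)

lemma annCond_iff_vLE {p g : F[X]} {S : ℕ → F} (n : ℕ) (h : IsPosPart (toL p * sbar S) g) :
    AnnCond n S p ↔ vLE (toL p * sbar S - toL (X * g)) ((p.natDegree : ℤ) - n) := by
  rw [vLE_iff_of_coeff_neg _ fun e he => coeff_sub_toL_X_mul_of_neg h he]
  refine forall_congr' fun t => ?_
  rw [coeff_sub_toL_X_mul_natCast, coeff_toL_mul_sbar_natCast]
  exact imp_congr_left (by omega)

end

open Polynomial in
theorem solution_iff_valuation_bound_general {F : Type*} [Field F] (n : ℕ)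
    (S : ℕ → F) (f₁ f₂ : Polynomial F) (hf₁ : f₁ ≠ 0) (hdeg : f₁.natDegree ≤ n)
    (hf₂ : IsPosPart (toL f₁ * sbar S) f₂) :
    IsPosPart (toL f₁ * sbar (fun k => if k < n then S k else 0)) f₂ ∧
      (IsSolution n S f₁ f₂ ↔
        vLE (toL f₁ * sbar S - toL (X * f₂)) ((f₁.natDegree : ℤ) - n)) := by
  refine ⟨isPosPart_truncate hdeg hf₂, ?_⟩
  rw [IsSolution, Annihilates, ← annCond_iff_vLE n hf₂]
  exact ⟨fun h => h.1.2, fun h => ⟨⟨hf₁, h⟩, seqNum_of_isPosPart hdeg hf₂⟩⟩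

open Polynomial in
/-- For `f₁ ≠ 0` with `deg f₁ ≤ n` and `x f₂ = [f₁·S̄]`: the positive parts
`[f₁·S̄]` and `[f₁·s̄]` agree (`s = S|n`), and `(f₁, f₂)` is a solution for `s`
iff `v(f₁·S̄ − x f₂) ≤ deg f₁ − n`. -/
theorem solution_iff_valuation_bound {F : Type*} [Field F] (n : ℕ) (hn : 1 ≤ n)
    (S : ℕ → F) (f₁ f₂ : Polynomial F) (hf₁ : f₁ ≠ 0) (hdeg : f₁.natDegree ≤ n)
    (hf₂ : IsPosPart (toL f₁ * sbar S) f₂) :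
    IsPosPart (toL f₁ * sbar (fun k => if k < n then S k else 0)) f₂ ∧
      (IsSolution n S f₁ f₂ ↔
        vLE (toL f₁ * sbar S - toL (X * f₂)) ((f₁.natDegree : ℤ) - n)) :=
  solution_iff_valuation_bound_general n S f₁ f₂ hf₁ hdeg hf₂
end

section
/- Let F be a field, n ≥ 1, and s = S|n a nontrivial initial segment of an infinite sequence S over F. Write LC_k for the linear complexity of S|k. Then: (i) either LC_{n+1} = LC_n, or LC_{n+1} = n + 1 − LC_n > LC_n; (ii) if no minimal polynomial of s annihilates S|(n+1), then LC_{n+1} = max{LC_n, n + 1 − LC_n}. -/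
/-! The proof is the Berlekamp–Massey argument. If a minimal polynomial `φ` of `S|n` fails on
`S|(n+1)`, then, writing `ψ` for a minimal polynomial of `S|(n+1)`, the double sum
`∑ φᵢ ψⱼ S(r+i+j)` read in two ways gives Massey's bound `LC_n + LC_{n+1} ≥ n + 1`. Conversely,
combining `φ` with a minimal polynomial `χ` of `S|m` at the last length `m < n` where the linear
complexity jumped, `Xᵃ φ - (δ/δ') Xᵇ χ` cancels the discrepancy of `φ` against the discrepancy `δ'`
of `χ`; by induction `LC_{m+1} = m + 1 - LC_m`, which makes its degree `max (LC_n, n + 1 - LC_n)`. -/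

open Polynomial Finset

theorem exists_last_ne {α : Type*} (f : ℕ → α) {n : ℕ} (h : f 0 ≠ f n) :
    ∃ m < n, f m ≠ f (m + 1) ∧ f (m + 1) = f n := by
  induction n with
  | zero => exact absurd rfl h
  | succ n ih =>
    by_cases hn : f n = f (n + 1)
    · obtain ⟨m, hm, hne, heq⟩ := ih (hn ▸ h)
      exact ⟨m, by omega, hne, heq.trans hn⟩
    · exact ⟨n, n.lt_succ_self, hn, rfl⟩

section CommRing

variable {D : Type*} [CommRing D] {s : ℕ → D} {m n t : ℕ} {φ ψ : D[X]}

/-- The sum whose vanishing for `t + deg φ + 1 ≤ n` is `AnnCond n s φ`. -/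
def discrepancy (s : ℕ → D) (φ : D[X]) (t : ℕ) : D :=
  ∑ j ∈ range (φ.natDegree + 1), φ.coeff j * s (t + j)

theorem AnnCond.discrepancy_eq_zero (h : AnnCond n s φ) (ht : t + φ.natDegree + 1 ≤ n) :
    discrepancy s φ t = 0 :=
  h t ht

theorem AnnCond.mono (h : AnnCond n s φ) (hmn : m ≤ n) : AnnCond m s φ :=
  fun t ht => h t (ht.trans hmn)

theorem Annihilates.mono (h : Annihilates n s φ) (hmn : m ≤ n) : Annihilates m s φ :=
  ⟨h.1, h.2.mono hmn⟩

theorem discrepancy_eq_sum_range {N : ℕ} (h : φ.natDegree ≤ N) :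
    discrepancy s φ t = ∑ j ∈ range (N + 1), φ.coeff j * s (t + j) := by
  refine sum_subset (fun j hj => ?_) (fun j _ hj => ?_)
  · simp only [mem_range] at hj ⊢
    omega
  · simp only [mem_range] at hj
    rw [coeff_eq_zero_of_natDegree_lt (by omega), zero_mul]

theorem discrepancy_sub_C_mul (c : D) :
    discrepancy s (φ - C c * ψ) t = discrepancy s φ t - c * discrepancy s ψ t := by
  have hle : (φ - C c * ψ).natDegree ≤ max φ.natDegree ψ.natDegree :=
    (natDegree_sub_le _ _).trans (max_le_max le_rfl (natDegree_C_mul_le c ψ))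
  rw [discrepancy_eq_sum_range hle, discrepancy_eq_sum_range (le_max_left _ ψ.natDegree),
    discrepancy_eq_sum_range (le_max_right φ.natDegree _), mul_sum, ← sum_sub_distrib]
  refine sum_congr rfl fun j _ => ?_
  rw [coeff_sub, coeff_C_mul]
  ring

theorem discrepancy_mul_X_pow (a : ℕ) :
    discrepancy s (φ * X ^ a) t = discrepancy s φ (t + a) := by
  have hle : (φ * X ^ a).natDegree ≤ a + φ.natDegree :=
    natDegree_mul_le.trans (by have := natDegree_X_pow_le (R := D) a; omega)
  rw [discrepancy_eq_sum_range hle, add_assoc, sum_range_add, discrepancy]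
  have hlow : ∑ j ∈ range a, (φ * X ^ a).coeff j * s (t + j) = 0 :=
    sum_eq_zero fun j hj => by
      rw [coeff_mul_X_pow', if_neg (by simp only [mem_range] at hj; omega), zero_mul]
  rw [hlow, zero_add]
  refine sum_congr rfl fun j _ => ?_
  rw [add_comm a j, coeff_mul_X_pow, add_comm j a, add_assoc]

theorem AnnCond.natDegree_le_and_discrepancy_ne_zero (h : AnnCond n s φ) (h' : ¬AnnCond (n + 1) s φ) :
    φ.natDegree ≤ n ∧ discrepancy s φ (n - φ.natDegree) ≠ 0 := by
  simp only [AnnCond, not_forall] at h'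
  obtain ⟨t, ht, hne⟩ := h'
  have htn : t = n - φ.natDegree := by
    by_contra h''
    exact hne (h t (by omega))
  exact ⟨by omega, htn ▸ hne⟩

theorem sum_coeff_mul_discrepancy_comm (r : ℕ) :
    ∑ j ∈ range (ψ.natDegree + 1), ψ.coeff j * discrepancy s φ (r + j)
      = ∑ i ∈ range (φ.natDegree + 1), φ.coeff i * discrepancy s ψ (r + i) := by
  simp only [discrepancy, mul_sum]
  rw [sum_comm]
  refine sum_congr rfl fun i _ => sum_congr rfl fun j _ => ?_
  rw [add_right_comm]
  ring

/-- Massey's lower bound. -/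
theorem succ_le_natDegree_add_natDegree [NoZeroDivisors D] (hφ : AnnCond n s φ)
    (hφ' : ¬AnnCond (n + 1) s φ) (hψ : Annihilates (n + 1) s ψ) :
    n + 1 ≤ φ.natDegree + ψ.natDegree := by
  obtain ⟨-, hδ⟩ := hφ.natDegree_le_and_discrepancy_ne_zero hφ'
  by_contra! hlt
  set r := n - φ.natDegree - ψ.natDegree
  have hψsum : ∑ i ∈ range (φ.natDegree + 1), φ.coeff i * discrepancy s ψ (r + i) = 0 :=
    sum_eq_zero fun i hi => by
      rw [hψ.2.discrepancy_eq_zero (by simp only [mem_range] at hi; omega), mul_zero]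
  rw [← sum_coeff_mul_discrepancy_comm, sum_range_succ,
    sum_eq_zero fun j hj => by
      rw [hφ.discrepancy_eq_zero (by simp only [mem_range] at hj; omega), mul_zero],
    zero_add, show r + ψ.natDegree = n - φ.natDegree by omega] at hψsum
  exact hδ ((mul_eq_zero.mp hψsum).resolve_left (leadingCoeff_ne_zero.mpr hψ.1))

theorem lc_le (h : Annihilates n s φ) : LC n s ≤ φ.natDegree :=
  Nat.sInf_le ⟨φ, h, rfl⟩

section Nontrivial

variable [Nontrivial D]

theorem annihilates_X_pow (n : ℕ) (s : ℕ → D) : Annihilates n s (X ^ n) :=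
  ⟨(monic_X_pow n).ne_zero, fun t ht => absurd ht (by rw [natDegree_X_pow]; omega)⟩

theorem exists_annihilates_natDegree_eq_lc (n : ℕ) (s : ℕ → D) :
    ∃ φ : D[X], Annihilates n s φ ∧ φ.natDegree = LC n s := by
  have : {d | ∃ φ : D[X], Annihilates n s φ ∧ φ.natDegree = d}.Nonempty :=
    ⟨n, X ^ n, annihilates_X_pow n s, natDegree_X_pow n⟩
  exact Nat.sInf_mem this

theorem lc_le_self (n : ℕ) (s : ℕ → D) : LC n s ≤ n :=
  (lc_le (annihilates_X_pow n s)).trans (natDegree_X_pow n).le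

theorem lc_mono (s : ℕ → D) (hmn : m ≤ n) : LC m s ≤ LC n s := by
  obtain ⟨φ, hφ, hdeg⟩ := exists_annihilates_natDegree_eq_lc n s
  exact hdeg ▸ lc_le (hφ.mono hmn)

theorem lc_zero (s : ℕ → D) : LC 0 s = 0 :=
  Nat.le_zero.mp (lc_le_self 0 s)

end Nontrivial

end CommRing

section Field

variable {F : Type*} [Field F] {s : ℕ → F} {m n : ℕ}

theorem lc_succ_le_of_not_annCond_succ {D : ℕ} {φ χ : F[X]} (hφ : Annihilates n s φ)
    (hχ : AnnCond m s χ) (hχ' : ¬AnnCond (m + 1) s χ) (hmn : m < n)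
    (hφD : φ.natDegree ≤ D) (hχD : n - m + χ.natDegree ≤ D) :
    LC (n + 1) s ≤ D := by
  obtain ⟨he, hδ⟩ := hχ.natDegree_le_and_discrepancy_ne_zero hχ'
  set L := φ.natDegree
  set e := χ.natDegree
  set b := D + m - n - e
  set c := discrepancy s φ (n - L) / discrepancy s χ (m - e)
  set ρ := φ * X ^ (D - L) - C c * (χ * X ^ b)
  have hdeg : ρ.natDegree = D := by
    have hφX : (φ * X ^ (D - L)).natDegree = D := by
      rw [natDegree_mul_X_pow (D - L) hφ.1]
      omega
    have hχX : (C c * (χ * X ^ b)).natDegree < D :=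
      calc (C c * (χ * X ^ b)).natDegree ≤ (χ * X ^ b).natDegree := natDegree_C_mul_le _ _
        _ ≤ e + b := natDegree_mul_le.trans (by have := natDegree_X_pow_le (R := F) b; omega)
        _ < D := by omega
    rw [natDegree_sub_eq_left_of_natDegree_lt (hχX.trans_eq hφX.symm), hφX]
  have hρ : Annihilates (n + 1) s ρ := by
    refine ⟨ne_zero_of_natDegree_gt (n := 0) (by omega), fun t ht => ?_⟩
    change discrepancy s ρ t = 0
    rw [hdeg] at ht
    rw [discrepancy_sub_C_mul, discrepancy_mul_X_pow, discrepancy_mul_X_pow]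
    obtain hlt | rfl : t < n - D ∨ t = n - D := by omega
    · rw [hφ.2.discrepancy_eq_zero (by omega), hχ.discrepancy_eq_zero (by omega), mul_zero,
        sub_zero]
    · rw [show n - D + (D - L) = n - L by omega, show n - D + b = m - e by omega,
        div_mul_cancel₀ _ hδ, sub_self]
  exact hdeg ▸ lc_le hρ

theorem lc_succ_le_max {φ : F[X]}
    (ih : ∀ m < n, LC m s ≠ LC (m + 1) s → LC (m + 1) s = m + 1 - LC m s)
    (hφ : Annihilates n s φ) (hφdeg : φ.natDegree = LC n s) :
    LC (n + 1) s ≤ max (LC n s) (n + 1 - LC n s) := by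
  rcases Nat.eq_zero_or_pos (LC n s) with h0 | hpos
  · exact (lc_le_self (n + 1) s).trans (by omega)
  obtain ⟨m, hmn, hjump, hlast⟩ := exists_last_ne (fun k => LC k s) (n := n) (by
    rw [lc_zero]
    omega)
  have hm := ih m hmn hjump
  obtain ⟨χ, hχ, hχdeg⟩ := exists_annihilates_natDegree_eq_lc m s
  have hχ' : ¬AnnCond (m + 1) s χ := fun h =>
    hjump (le_antisymm (lc_mono s m.le_succ) (hχdeg ▸ lc_le ⟨hχ.1, h⟩))
  have := lc_le_self m s
  exact lc_succ_le_of_not_annCond_succ hφ hχ.2 hχ' hmn (hφdeg.trans_le (le_max_left _ _))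
    (by omega)

theorem lc_succ_eq_or (s : ℕ → F) (n : ℕ) :
    LC (n + 1) s = LC n s ∨ (LC (n + 1) s = n + 1 - LC n s ∧ LC n s < LC (n + 1) s) := by
  induction n using Nat.strong_induction_on with
  | _ n ih =>
  obtain ⟨φ, hφ, hφdeg⟩ := exists_annihilates_natDegree_eq_lc n s
  have hmono := lc_mono s (Nat.le_add_right n 1)
  by_cases hext : AnnCond (n + 1) s φ
  · exact .inl (le_antisymm (hφdeg ▸ lc_le ⟨hφ.1, hext⟩) hmono)
  obtain ⟨ψ, hψ, hψdeg⟩ := exists_annihilates_natDegree_eq_lc (n + 1) s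
  have hlow := succ_le_natDegree_add_natDegree hφ.2 hext hψ
  have hup := lc_succ_le_max (fun m hm hne => ((ih m hm).resolve_left (Ne.symm hne)).1) hφ hφdeg
  omega

end Field

theorem linearComplexity_jump_general {F : Type*} [Field F] (n : ℕ) (S : ℕ → F) :
    (LC (n + 1) S = LC n S ∨
        (LC (n + 1) S = n + 1 - LC n S ∧ LC n S < LC (n + 1) S)) ∧
      ((∀ φ : Polynomial F, Annihilates n S φ → φ.natDegree = LC n S →
          ¬ Annihilates (n + 1) S φ) →
        LC (n + 1) S = max (LC n S) (n + 1 - LC n S)) := by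
  refine ⟨lc_succ_eq_or S n, fun hmin => ?_⟩
  obtain ⟨ψ, hψ, hψdeg⟩ := exists_annihilates_natDegree_eq_lc (n + 1) S
  have hne : LC (n + 1) S ≠ LC n S := fun heq =>
    hmin ψ (hψ.mono n.le_succ) (hψdeg.trans heq) hψ
  have := (lc_succ_eq_or S n).resolve_left hne
  omega

/-- Linear-complexity jump: for nontrivial `s = S|n`, either `LC_{n+1} = LC_n` or
`LC_{n+1} = n+1−LC_n > LC_n`; and if no minimal polynomial of `s` annihilates
`S|(n+1)` then `LC_{n+1} = max{LC_n, n+1−LC_n}`. -/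
theorem linearComplexity_jump {F : Type*} [Field F] (n : ℕ) (hn : 1 ≤ n) (S : ℕ → F)
    (hnt : ∃ k < n, S k ≠ 0) :
    (LC (n + 1) S = LC n S ∨
        (LC (n + 1) S = n + 1 - LC n S ∧ LC n S < LC (n + 1) S)) ∧
      ((∀ φ : Polynomial F, Annihilates n S φ → φ.natDegree = LC n S →
          ¬ Annihilates (n + 1) S φ) →
        LC (n + 1) S = max (LC n S) (n + 1 - LC n S)) :=
  linearComplexity_jump_general n S
end

section
/- Let D be a commutative domain, n ≥ 1, and s = s_0,…,s_{1-n} a sequence over D, with LC_k the linear complexity of s_0,…,s_{1-k}. Define σ_n = Σ_{k=1}^{n} LC_k. Then σ_n = LC_n (n + 1 − LC_n) ≤ (n+1)²/4, with equality in the inequality if and only if n = 2·LC_n − 1. -/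
namespace LCAux
open Polynomial Finset

set_option linter.unusedSectionVars false
set_option maxHeartbeats 1000000

variable {D : Type*} [CommRing D] [IsDomain D] {s : ℕ → D}

/-- `E s φ t = Σ_{j=0}^{deg φ} φ_j s(t+j)`, the evaluation appearing in `AnnCond`. -/
noncomputable def E (s : ℕ → D) (φ : D[X]) (t : ℕ) : D :=
  ∑ j ∈ Finset.range (φ.natDegree + 1), φ.coeff j * s (t + j)

noncomputable def F (s : ℕ → D) (N : ℕ) (φ : D[X]) (t : ℕ) : D :=
  ∑ j ∈ Finset.range N, φ.coeff j * s (t + j)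

lemma annCond_iff {n : ℕ} {φ : D[X]} :
    AnnCond n s φ ↔ ∀ t, t + φ.natDegree + 1 ≤ n → E s φ t = 0 := Iff.rfl

lemma F_eq_E {N t : ℕ} {φ : D[X]} (h : φ.natDegree < N) : F s N φ t = E s φ t := by
  unfold F E
  refine (Finset.sum_subset (Finset.range_subset_range.2 h) fun j _ hj => ?_).symm
  rw [Finset.mem_range, not_lt] at hj
  rw [coeff_eq_zero_of_natDegree_lt (by omega), zero_mul]

lemma F_X_mul (φ : D[X]) (N t : ℕ) : F s (N + 1) (X * φ) t = F s N φ (t + 1) := by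
  unfold F
  rw [Finset.sum_range_succ']
  have h0 : (X * φ).coeff 0 = 0 := by simp [mul_coeff_zero]
  rw [h0, zero_mul, add_zero]
  exact Finset.sum_congr rfl fun i _ => by rw [coeff_X_mul, show t + (i + 1) = t + 1 + i by omega]

lemma F_X_pow_mul (s : ℕ → D) (φ : D[X]) :
    ∀ (u N t : ℕ), F s (u + N) ((X : D[X]) ^ u * φ) t = F s N φ (t + u)
  | 0, N, t => by simp
  | (u+1), N, t => by
    have h : (X : D[X]) ^ (u + 1) * φ = X * (X ^ u * φ) := by ring
    rw [show u + 1 + N = (u + N) + 1 by omega, h, F_X_mul, F_X_pow_mul s φ u N (t+1),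
      show t + 1 + u = t + (u + 1) by omega]

lemma E_swap (s : ℕ → D) (φ ψ : D[X]) (T : ℕ) :
    ∑ j ∈ Finset.range (ψ.natDegree + 1), ψ.coeff j * E s φ (T + j) =
      ∑ i ∈ Finset.range (φ.natDegree + 1), φ.coeff i * E s ψ (T + i) := by
  simp only [E, Finset.mul_sum]
  rw [Finset.sum_comm]
  refine Finset.sum_congr rfl fun i _ => Finset.sum_congr rfl fun j _ => ?_
  rw [show T + j + i = T + i + j by omega]; ring

lemma ann_X_pow (n : ℕ) : Annihilates n s ((X : D[X]) ^ n) := by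
  refine ⟨pow_ne_zero _ X_ne_zero, fun t ht => ?_⟩
  rw [natDegree_X_pow] at ht; omega

lemma lc_set_nonempty (n : ℕ) :
    {d | ∃ φ : D[X], Annihilates n s φ ∧ φ.natDegree = d}.Nonempty :=
  ⟨n, (X : D[X]) ^ n, ann_X_pow n, natDegree_X_pow n⟩

lemma exists_min (n : ℕ) : ∃ φ : D[X], Annihilates n s φ ∧ φ.natDegree = LC n s :=
  Nat.sInf_mem (lc_set_nonempty n)

lemma LC_le_of_ann {n : ℕ} {φ : D[X]} (h : Annihilates n s φ) : LC n s ≤ φ.natDegree :=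
  Nat.sInf_le ⟨φ, h, rfl⟩

lemma LC_le (n : ℕ) : LC n s ≤ n := by
  simpa using LC_le_of_ann (ann_X_pow (s := s) n)

lemma ann_of_succ {n : ℕ} {φ : D[X]} (h : Annihilates (n + 1) s φ) : Annihilates n s φ :=
  ⟨h.1, fun t ht => h.2 t (by omega)⟩

lemma LC_mono (n : ℕ) : LC n s ≤ LC (n + 1) s := by
  obtain ⟨φ, hφ, hdeg⟩ := exists_min (s := s) (n + 1)
  exact hdeg ▸ LC_le_of_ann (ann_of_succ hφ)

lemma LC_zero : LC 0 s = 0 := by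
  refine Nat.le_zero.mp (Nat.sInf_le ⟨1, ⟨one_ne_zero, fun t ht => ?_⟩, natDegree_one⟩)
  rw [natDegree_one] at ht; omega

/-- Key lower bound. -/
lemma lower_bound {m : ℕ} {φ ψ : D[X]} (hφ0 : φ ≠ 0) (hψ0 : ψ ≠ 0)
    (hφ : ∀ t, t + φ.natDegree + 1 ≤ m → E s φ t = 0)
    (hψ : ∀ t, t + ψ.natDegree + 1 ≤ m + 1 → E s ψ t = 0)
    (ham : φ.natDegree ≤ m)
    (hfail : E s φ (m - φ.natDegree) ≠ 0) :
    m + 1 ≤ φ.natDegree + ψ.natDegree := by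
  set a := φ.natDegree with hadef
  set b := ψ.natDegree with hbdef
  by_contra hcon
  push_neg at hcon
  obtain ⟨T, hT⟩ : ∃ T, T + a + b = m := ⟨m - a - b, by omega⟩
  have key := E_swap s φ ψ T
  have hR : ∑ i ∈ Finset.range (a + 1), φ.coeff i * E s ψ (T + i) = 0 := by
    refine Finset.sum_eq_zero fun i hi => ?_
    rw [Finset.mem_range] at hi
    rw [hψ (T + i) (by omega), mul_zero]
  have hL : ∑ j ∈ Finset.range (b + 1), ψ.coeff j * E s φ (T + j)
      = ψ.coeff b * E s φ (T + b) := by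
    rw [Finset.sum_range_succ]
    rw [Finset.sum_eq_zero fun j hj => ?_, zero_add]
    rw [Finset.mem_range] at hj
    rw [hφ (T + j) (by omega), mul_zero]
  rw [hL, hR] at key
  have hmb : m - a = T + b := by omega
  rw [hmb] at hfail
  have hb0 : ψ.coeff b ≠ 0 := by
    rw [hbdef, ← leadingCoeff]
    exact leadingCoeff_ne_zero.mpr hψ0
  exact (mul_ne_zero hb0 hfail) key

/-- Berlekamp–Massey update construction. -/
lemma construct {m r a b c p q : ℕ} {φ χ : D[X]} (hφ0 : φ ≠ 0) (hχ0 : χ ≠ 0)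
    (hadef : φ.natDegree = a) (hcdef : χ.natDegree = c)
    (hφ : ∀ t, t + a + 1 ≤ m → E s φ t = 0)
    (hχ : ∀ t, t + c + 1 ≤ r → E s χ t = 0)
    (hrm : r < m) (hlink : a + c = r + 1)
    (hab : a + b = m + 1) (hp : p + a = m) (hq : q + c = r)
    (hd : E s φ p ≠ 0) (he : E s χ q ≠ 0) :
    ∃ Φ : D[X], Φ ≠ 0 ∧ (∀ t, t + Φ.natDegree + 1 ≤ m + 1 → E s Φ t = 0) ∧
      Φ.natDegree = max a b := by
  have hcb : c < b := by omega
  obtain ⟨M, haM, hbM, hMdef⟩ : ∃ M, a ≤ M ∧ b ≤ M ∧ M = max a b :=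
    ⟨max a b, le_max_left _ _, le_max_right _ _, rfl⟩
  obtain ⟨u, hua⟩ : ∃ u, u + a = M := ⟨M - a, by omega⟩
  obtain ⟨v, hvb⟩ : ∃ v, v + b = M := ⟨M - b, by omega⟩
  set d := E s φ p with hddef
  set e := E s χ q with hedef
  set Φ : D[X] := C e * (X ^ u * φ) - C d * (X ^ v * χ) with hΦdef
  have hcoeff : ∀ k, Φ.coeff k =
      e * (if u ≤ k then φ.coeff (k - u) else 0) - d * (if v ≤ k then χ.coeff (k - v) else 0) := by
    intro k
    rw [hΦdef, coeff_sub, coeff_C_mul, coeff_C_mul, X_pow_mul, X_pow_mul,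
      coeff_mul_X_pow', coeff_mul_X_pow']
  have hφa : φ.coeff a ≠ 0 := by
    rw [← hadef, ← leadingCoeff]; exact leadingCoeff_ne_zero.mpr hφ0
  have hcM : Φ.coeff M = e * φ.coeff a := by
    rw [hcoeff, if_pos (by omega : u ≤ M), if_pos (by omega : v ≤ M),
      show M - u = a by omega, show M - v = b by omega,
      coeff_eq_zero_of_natDegree_lt (show χ.natDegree < b by omega), mul_zero, sub_zero]
  have hcMne : Φ.coeff M ≠ 0 := hcM ▸ mul_ne_zero he hφa
  have hΦ0 : Φ ≠ 0 := fun h => hcMne (by rw [h, coeff_zero])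
  have hhigh : ∀ k, M < k → Φ.coeff k = 0 := by
    intro k hk
    rw [hcoeff, if_pos (by omega : u ≤ k), if_pos (by omega : v ≤ k),
      coeff_eq_zero_of_natDegree_lt (show φ.natDegree < k - u by omega),
      coeff_eq_zero_of_natDegree_lt (show χ.natDegree < k - v by omega),
      mul_zero, mul_zero, sub_zero]
  have hdeg : Φ.natDegree = M :=
    le_antisymm (natDegree_le_iff_coeff_eq_zero.mpr hhigh) (le_natDegree_of_ne_zero hcMne)
  refine ⟨Φ, hΦ0, fun t ht => ?_, hdeg.trans hMdef⟩
  rw [hdeg] at ht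
  have hE : E s Φ t = e * E s φ (t + u) - d * E s χ (t + v) := by
    have h1 : E s Φ t = F s (M + 1) Φ t := (F_eq_E (by omega)).symm
    have h2 : F s (M + 1) Φ t =
        e * F s (M + 1) ((X:D[X]) ^ u * φ) t - d * F s (M + 1) ((X:D[X]) ^ v * χ) t := by
      unfold F
      rw [Finset.mul_sum, Finset.mul_sum, ← Finset.sum_sub_distrib]
      refine Finset.sum_congr rfl fun j _ => ?_
      rw [hΦdef, coeff_sub, coeff_C_mul, coeff_C_mul]; ring
    have h3 : F s (M + 1) ((X:D[X]) ^ u * φ) t = E s φ (t + u) := by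
      rw [show M + 1 = u + (a + 1) by omega, F_X_pow_mul, F_eq_E (by omega)]
    have h4 : F s (M + 1) ((X:D[X]) ^ v * χ) t = E s χ (t + v) := by
      rw [show M + 1 = v + (b + 1) by omega, F_X_pow_mul, F_eq_E (by omega)]
    rw [h1, h2, h3, h4]
  rw [hE]
  rcases eq_or_lt_of_le ht with hEq | hLt
  · rw [show t + u = p by omega, show t + v = q by omega, ← hddef, ← hedef]; ring
  · rw [hφ (t + u) (by omega), hχ (t + v) (by omega), mul_zero, mul_zero, sub_zero]

/-- Invariant: `LC m = 0`, or there is a last-jump witness. -/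
def Q (s : ℕ → D) (m : ℕ) : Prop :=
  LC m s = 0 ∨ ∃ r, r < m ∧ ∃ χ : D[X], Annihilates r s χ ∧ χ.natDegree = LC r s ∧
    LC m s = r + 1 - LC r s ∧ E s χ (r - LC r s) ≠ 0

lemma Q_zero : Q s 0 := Or.inl LC_zero

lemma dichotomy_step (m : ℕ) (hQ : Q s m) :
    (LC (m+1) s = LC m s ∨ (LC m s < LC (m+1) s ∧ LC (m+1) s = m + 1 - LC m s)) ∧ Q s (m+1) := by
  obtain ⟨φ, hφa, hφdeg⟩ := exists_min (s := s) m
  obtain ⟨hφ0, hφc⟩ := hφa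
  have hφc' : ∀ t, t + φ.natDegree + 1 ≤ m → E s φ t = 0 := hφc
  have haLm : LC m s ≤ m := LC_le m
  by_cases hd : E s φ (m - φ.natDegree) = 0
  · -- no discrepancy: LC stays
    have hann : Annihilates (m+1) s φ := by
      refine ⟨hφ0, fun t ht => ?_⟩
      rcases eq_or_lt_of_le ht with hEq | hLt
      · have : t = m - φ.natDegree := by rw [hφdeg] at *; omega
        rw [this]; exact hd
      · exact hφc' t (by omega)
    have hle : LC (m+1) s ≤ LC m s := hφdeg ▸ LC_le_of_ann hann
    have heq : LC (m+1) s = LC m s := le_antisymm hle (LC_mono m)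
    refine ⟨Or.inl heq, ?_⟩
    rcases hQ with h0 | ⟨r, hr, χ, h1, h2, h3, h4⟩
    · exact Or.inl (heq.trans h0)
    · exact Or.inr ⟨r, by omega, χ, h1, h2, heq.trans h3, h4⟩
  · -- discrepancy: LC jumps or stays per max
    have hlow : m + 1 ≤ LC m s + LC (m+1) s := by
      obtain ⟨ψ, ⟨hψ0, hψc⟩, hψdeg⟩ := exists_min (s := s) (m+1)
      have hψc' : ∀ t, t + ψ.natDegree + 1 ≤ m + 1 → E s ψ t = 0 := hψc
      have := lower_bound hφ0 hψ0 hφc' hψc' (hφdeg ▸ haLm) hd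
      omega
    have hmono := LC_mono (s := s) m
    have hd' : E s φ (m - LC m s) ≠ 0 := by rw [← hφdeg]; exact hd
    by_cases hL0 : LC m s = 0
    · have hup : LC (m+1) s ≤ m + 1 := LC_le _
      refine ⟨Or.inr ⟨by omega, by omega⟩,
        Or.inr ⟨m, by omega, φ, ⟨hφ0, hφc⟩, hφdeg, by omega, hd'⟩⟩
    · rcases hQ with h0 | ⟨r, hr, χ, ⟨hχ0, hχc⟩, hχdeg, hLr, hEχ⟩
      · exact absurd h0 hL0
      have hLrr : LC r s ≤ r := LC_le r
      have hχc' : ∀ t, t + LC r s + 1 ≤ r → E s χ t = 0 := by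
        intro t ht; exact hχc t (by rw [hχdeg]; omega)
      obtain ⟨Φ, hΦ0, hΦc, hΦdeg⟩ :=
        construct (b := m + 1 - LC m s) (p := m - LC m s) (q := r - LC r s)
          hφ0 hχ0 hφdeg hχdeg
          (by intro t ht; exact hφc' t (by rw [hφdeg]; omega)) hχc'
          hr (by omega) (by omega) (by omega) (by omega)
          (by rwa [hφdeg] at hd) hEχ
      have hup : LC (m+1) s ≤ max (LC m s) (m + 1 - LC m s) :=
        hΦdeg ▸ LC_le_of_ann ⟨hΦ0, hΦc⟩
      have heq : LC (m+1) s = max (LC m s) (m + 1 - LC m s) := by omega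
      rcases le_or_gt (m + 1 - LC m s) (LC m s) with hcase | hcase
      · have heq2 : LC (m+1) s = LC m s := by omega
        exact ⟨Or.inl heq2, Or.inr ⟨r, by omega, χ, ⟨hχ0, hχc⟩, hχdeg, by omega, hEχ⟩⟩
      · refine ⟨Or.inr ⟨by omega, by omega⟩,
          Or.inr ⟨m, by omega, φ, ⟨hφ0, hφc⟩, hφdeg, by omega, hd'⟩⟩

lemma Q_all : ∀ m, Q s m
  | 0 => Q_zero
  | (m+1) => (dichotomy_step m (Q_all m)).2

lemma dichotomy (m : ℕ) :
    LC (m+1) s = LC m s ∨ (LC m s < LC (m+1) s ∧ LC (m+1) s = m + 1 - LC m s) :=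
  (dichotomy_step m (Q_all m)).1

lemma sum_eq : ∀ n : ℕ, (∑ k ∈ Finset.range n, LC (k + 1) s) = LC n s * (n + 1 - LC n s)
  | 0 => by simp [LC_zero]
  | (n+1) => by
    rw [Finset.sum_range_succ, sum_eq n]
    have hL : LC n s ≤ n := LC_le n
    rcases dichotomy (s := s) n with h | ⟨h1, h2⟩
    · rw [h, show n + 1 + 1 - LC n s = (n + 1 - LC n s) + 1 by omega, Nat.mul_succ]
    · rw [h2, show n + 1 + 1 - (n + 1 - LC n s) = LC n s + 1 by omega, Nat.mul_succ,
        Nat.mul_comm (n + 1 - LC n s) (LC n s)]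

end LCAux

/-- Sum of linear complexities: `σ_n = Σ_{k=1}^n LC_k = LC_n (n+1−LC_n) ≤ (n+1)²/4`,
with equality iff `n = 2 LC_n − 1`. -/
theorem sum_linearComplexity {D : Type*} [CommRing D] [IsDomain D]
    (n : ℕ) (hn : 1 ≤ n) (s : ℕ → D) :
    (∑ k ∈ Finset.range n, LC (k + 1) s) = LC n s * (n + 1 - LC n s) ∧
      4 * (∑ k ∈ Finset.range n, LC (k + 1) s) ≤ (n + 1) ^ 2 ∧
      (4 * (∑ k ∈ Finset.range n, LC (k + 1) s) = (n + 1) ^ 2 ↔ n + 1 = 2 * LC n s) := by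
  have hsum := LCAux.sum_eq (s := s) n
  have hm : LC n s ≤ n := LCAux.LC_le n
  refine ⟨hsum, ?_, ?_⟩ <;> rw [hsum]
  all_goals {
    obtain ⟨B, hB⟩ : ∃ B, LC n s + B = n + 1 := ⟨n + 1 - LC n s, by omega⟩
    rw [show n + 1 - LC n s = B by omega]
    rcases le_total (LC n s) B with hc | hc
    · obtain ⟨t, ht⟩ := Nat.exists_eq_add_of_le hc
      have h2 : (n + 1) ^ 2 = 4 * (LC n s * B) + t * t := by
        rw [show n + 1 = 2 * LC n s + t by omega, ht]; ring
      first
      | · rw [h2]; exact Nat.le_add_right _ _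
      | · rw [h2]
          constructor
          · intro hEq
            have ht0 : t * t = 0 := by omega
            have := mul_self_eq_zero.mp ht0
            omega
          · intro hEq
            have ht0 : t = 0 := by omega
            rw [ht0]
            simp
    · obtain ⟨t, ht⟩ := Nat.exists_eq_add_of_le hc
      have h2 : (n + 1) ^ 2 = 4 * (LC n s * B) + t * t := by
        rw [show n + 1 = 2 * B + t by omega, ht]; ring
      first
      | · rw [h2]; exact Nat.le_add_right _ _
      | · rw [h2]
          constructor
          · intro hEq
            have ht0 : t * t = 0 := by omega
            have := mul_self_eq_zero.mp ht0
            omega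
          · intro hEq
            have ht0 : t = 0 := by omega
            rw [ht0]
            simp
  }
end

section
/- Let F be a field, n ≥ 1 and s = s_0,…,s_{1-n} a sequence over F. Let (f_1, f_2) be a solution for s and d = gcd(f_1, f_2). Then (f_1/d, f_2/d) is also a solution for s; moreover, if (f_1,f_2) is a minimal solution (deg f_1 = LC(s)), then deg f_1 ≤ n and gcd(f_1, f_2) = 1. -/
namespace SolGcdAux

open Polynomial Finset

variable {F : Type*} [Field F]

noncomputable def Spoly (n : ℕ) (s : ℕ → F) : Polynomial F :=
  ∑ i ∈ Finset.range n, Polynomial.monomial i (s (n - 1 - i))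

lemma coeff_Spoly (n : ℕ) (s : ℕ → F) (m : ℕ) :
    (Spoly n s).coeff m = if m < n then s (n - 1 - m) else 0 := by
  simp only [Spoly, finset_sum_coeff, coeff_monomial]
  rw [Finset.sum_ite_eq' (Finset.range n) m (fun i => s (n - 1 - i))]
  simp [Finset.mem_range]

lemma coeff_mul_Spoly (n : ℕ) (s : ℕ → F) (φ : Polynomial F) (m : ℕ) :
    (φ * Spoly n s).coeff m = ∑ j ∈ Finset.range (φ.natDegree + 1),
      if j ≤ m ∧ m - j < n then φ.coeff j * s (n - 1 - (m - j)) else 0 := by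
  have hL : (φ * Spoly n s).coeff m = ∑ j ∈ Finset.range (max (m + 1) (φ.natDegree + 1)),
      (if j ≤ m ∧ m - j < n then φ.coeff j * s (n - 1 - (m - j)) else 0) := by
    rw [coeff_mul, Finset.Nat.sum_antidiagonal_eq_sum_range_succ_mk]
    have step1 : ∑ j ∈ Finset.range (m + 1), φ.coeff j * (Spoly n s).coeff (m - j)
        = ∑ j ∈ Finset.range (m + 1),
          (if j ≤ m ∧ m - j < n then φ.coeff j * s (n - 1 - (m - j)) else 0) := by
      refine Finset.sum_congr rfl fun j hj => ?_
      simp only [Finset.mem_range] at hj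
      rw [coeff_Spoly, mul_ite, mul_zero]
      simp only [show (j ≤ m ∧ m - j < n ↔ m - j < n) from by omega]
    rw [step1]
    refine Finset.sum_subset (Finset.range_subset_range.2 (le_max_left _ _)) fun j _ hj => ?_
    simp only [Finset.mem_range] at hj
    exact if_neg (fun h => hj (by omega))
  rw [hL]
  refine (Finset.sum_subset (Finset.range_subset_range.2 (le_max_right _ _)) fun j _ hj => ?_).symm
  simp only [Finset.mem_range] at hj
  split_ifs with h1
  · rw [coeff_eq_zero_of_natDegree_lt (by omega), zero_mul]
  · rfl

lemma annCond_iff (n : ℕ) (s : ℕ → F) (φ : Polynomial F) :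
    AnnCond n s φ ↔
      ∀ m, φ.natDegree ≤ m → m < n → (φ * Spoly n s).coeff m = 0 := by
  constructor
  · intro h m hdm hmn
    rw [coeff_mul_Spoly]
    have hsum : ∑ j ∈ Finset.range (φ.natDegree + 1),
        (if j ≤ m ∧ m - j < n then φ.coeff j * s (n - 1 - (m - j)) else 0)
        = ∑ j ∈ Finset.range (φ.natDegree + 1), φ.coeff j * s ((n - 1 - m) + j) := by
      refine Finset.sum_congr rfl fun j hj => ?_
      simp only [Finset.mem_range] at hj
      rw [if_pos ⟨by omega, by omega⟩]
      congr 2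
      omega
    rw [hsum]
    exact h (n - 1 - m) (by omega)
  · intro h t ht
    have := h (n - 1 - t) (by omega) (by omega)
    rw [coeff_mul_Spoly] at this
    rw [← this]
    refine Finset.sum_congr rfl fun j hj => ?_
    simp only [Finset.mem_range] at hj
    rw [if_pos ⟨by omega, by omega⟩]
    congr 2
    omega

lemma seqNum_iff (n : ℕ) (hn : 1 ≤ n) (s : ℕ → F) (φ ψ : Polynomial F) :
    SeqNum n s φ ψ ↔ ∀ k, ψ.coeff k = (φ * Spoly n s).coeff (n + k) := by
  have e : ∀ k, (φ * Spoly n s).coeff (n + k) = ∑ j ∈ Finset.range (φ.natDegree + 1),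
      if k + 1 ≤ j ∧ j - (k + 1) < n then φ.coeff j * s (j - (k + 1)) else 0 := by
    intro k
    rw [coeff_mul_Spoly]
    refine Finset.sum_congr rfl fun j hj => ?_
    simp only [Finset.mem_range] at hj
    split_ifs with h1 h2 h2
    · congr 2; omega
    · exact absurd ⟨by omega, by omega⟩ h2
    · exact absurd ⟨by omega, by omega⟩ h1
    · rfl
  unfold SeqNum
  constructor
  · intro h k; rw [h k, e k]
  · intro h k; rw [h k, e k]

lemma isSolution_iff (n : ℕ) (hn : 1 ≤ n) (s : ℕ → F) (φ ψ : Polynomial F) (hφ : φ ≠ 0) :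
    IsSolution n s φ ψ ↔
      (φ * Spoly n s - ψ * X ^ n).degree < ((min φ.natDegree n : ℕ) : WithBot ℕ) := by
  rw [Polynomial.degree_lt_iff_coeff_zero]
  constructor
  · rintro ⟨⟨-, hann⟩, hsn⟩ m hm
    simp only [coeff_sub, coeff_mul_X_pow']
    rcases le_or_gt n m with hnm | hnm
    · rw [if_pos hnm]
      have := (seqNum_iff n hn s φ ψ).1 hsn (m - n)
      rw [this]
      have : n + (m - n) = m := by omega
      rw [this, sub_self]
    · rw [if_neg (by omega), sub_zero]
      exact (annCond_iff n s φ).1 hann m (by omega) hnm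
  · intro h
    refine ⟨⟨hφ, ?_⟩, ?_⟩
    · rw [annCond_iff]
      intro m hdm hmn
      have := h m (by omega)
      simp only [coeff_sub, coeff_mul_X_pow', if_neg (show ¬ n ≤ m by omega),
        sub_zero] at this
      exact this
    · rw [seqNum_iff n hn]
      intro k
      have := h (n + k) (by omega)
      simp only [coeff_sub, coeff_mul_X_pow', if_pos (show n ≤ n + k by omega)] at this
      have hk : n + k - n = k := by omega
      rw [hk] at this
      exact (sub_eq_zero.1 this).symm

end SolGcdAux

/-- Dividing a solution by the gcd of its components gives a solution; a minimal
solution has `deg f₁ ≤ n` and coprime components. -/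
theorem solution_div_gcd {F : Type*} [Field F] [DecidableEq F] (n : ℕ) (hn : 1 ≤ n)
    (s : ℕ → F) (f₁ f₂ : Polynomial F) (hf : IsSolution n s f₁ f₂) :
    IsSolution n s (f₁ / EuclideanDomain.gcd f₁ f₂) (f₂ / EuclideanDomain.gcd f₁ f₂) ∧
      (f₁.natDegree = LC n s → f₁.natDegree ≤ n ∧ IsCoprime f₁ f₂) := by
  classical
  have hf0 := hf.1.1
  set g := EuclideanDomain.gcd f₁ f₂ with hg
  have hg0 : g ≠ 0 := fun h => hf0 ((EuclideanDomain.gcd_eq_zero_iff.1 h).1)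
  have e₁ : g * (f₁ / g) = f₁ :=
    EuclideanDomain.mul_div_cancel' hg0 (EuclideanDomain.gcd_dvd_left _ _)
  have e₂ : g * (f₂ / g) = f₂ :=
    EuclideanDomain.mul_div_cancel' hg0 (EuclideanDomain.gcd_dvd_right _ _)
  have hh₁ : f₁ / g ≠ 0 := by
    intro h
    apply hf0
    rw [← e₁, h, mul_zero]
  have hdeg₁ : f₁.natDegree = g.natDegree + (f₁ / g).natDegree := by
    conv_lhs => rw [← e₁]
    exact Polynomial.natDegree_mul hg0 hh₁
  have key : f₁ * SolGcdAux.Spoly n s - f₂ * Polynomial.X ^ n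
      = g * ((f₁ / g) * SolGcdAux.Spoly n s - (f₂ / g) * Polynomial.X ^ n) := by
    rw [mul_sub, ← mul_assoc, ← mul_assoc, e₁, e₂]
  have hr := (SolGcdAux.isSolution_iff n hn s f₁ f₂ hf0).1 hf
  rw [key] at hr
  set r' := (f₁ / g) * SolGcdAux.Spoly n s - (f₂ / g) * Polynomial.X ^ n with hr'def
  have hsol' : IsSolution n s (f₁ / g) (f₂ / g) := by
    rw [SolGcdAux.isSolution_iff n hn s _ _ hh₁, ← hr'def]
    rcases eq_or_ne r' 0 with h0 | h0
    · rw [h0, Polynomial.degree_zero]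
      exact WithBot.bot_lt_coe _
    · have hgr : g * r' ≠ 0 := mul_ne_zero hg0 h0
      rw [Polynomial.degree_eq_natDegree hgr, Polynomial.natDegree_mul hg0 h0] at hr
      have hlt : g.natDegree + r'.natDegree < min f₁.natDegree n := by exact_mod_cast hr
      rw [Polynomial.degree_eq_natDegree h0]
      exact_mod_cast (by omega : r'.natDegree < min (f₁ / g).natDegree n)
  refine ⟨hsol', fun hmin => ?_⟩
  have hxn : Annihilates n s (Polynomial.X ^ n : Polynomial F) := by
    refine ⟨pow_ne_zero _ Polynomial.X_ne_zero, fun t ht => ?_⟩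
    rw [Polynomial.natDegree_X_pow] at ht
    omega
  have hLCn : LC n s ≤ n :=
    Nat.sInf_le ⟨Polynomial.X ^ n, hxn, Polynomial.natDegree_X_pow n⟩
  have hLCh : LC n s ≤ (f₁ / g).natDegree :=
    Nat.sInf_le ⟨f₁ / g, hsol'.1, rfl⟩
  refine ⟨by omega, ?_⟩
  rw [← EuclideanDomain.gcd_isUnit_iff, Polynomial.isUnit_iff_degree_eq_zero,
    Polynomial.degree_eq_natDegree hg0]
  exact_mod_cast (by omega : g.natDegree = 0)
end

section
/- Let D be a commutative domain, n ≥ 2, and s = s_0,…,s_{1-n} an essential sequence over D with a minimal system (λ, n', λ', ⟨·,·⟩, ∇): λ a minimal solution for s with L = LC_n, λ' a minimal solution for s' = s_0,…,s_{1-n'} with L' = LC_{n'}, where n' = max{1 ≤ j < n : LC_j < LC_n}, L + L' = n' + 1, and ∇ = λ_2 λ'_1 − λ_1 λ'_2 ∈ D \ {0}. Let f = (f_1, f_2) with x f_2 = [f_1 · s̄], and set m = f_2 λ_1 − f_1 λ_2, m' = f_2 λ'_1 − f_1 λ'_2. Then f_1 is a nonzero annihilating polynomial of s if and only if deg m' =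 deg f_1 − L and deg m ≤ deg f_1 + L − n − 1 (with deg 0 = −∞). -/
open Polynomial Finset

section SequencePolynomial

variable {D : Type*} [CommRing D] {n : ℕ} {s : ℕ → D}

/-- `X ^ (n - 1) * s̄`, where `s i` stands for `s₋ᵢ`. -/
noncomputable def seqPoly (n : ℕ) (s : ℕ → D) : D[X] :=
  ∑ i ∈ range n, C (s i) * X ^ (n - 1 - i)

/-- `X ^ (n - 1) * (φ * s̄ - [φ * s̄])` when `X * ψ = [φ * s̄]`, so that the annihilation
condition `v(φ * s̄ - [φ * s̄]) ≤ deg φ - n` reads `deg (seqResidual n s φ ψ) < deg φ`. -/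
noncomputable def seqResidual (n : ℕ) (s : ℕ → D) (φ ψ : D[X]) : D[X] :=
  φ * seqPoly n s - X ^ n * ψ

lemma coeff_seqPoly (q : ℕ) : (seqPoly n s).coeff q = if q < n then s (n - 1 - q) else 0 := by
  simp only [seqPoly, finsetSum_coeff, coeff_C_mul, coeff_X_pow, mul_ite, mul_one, mul_zero]
  split_ifs with hq
  · rw [sum_eq_single_of_mem (n - 1 - q) (mem_range.2 (by omega))]
    · rw [if_pos (by omega)]
    · intro i hi hne
      rw [mem_range] at hi
      rw [if_neg (by omega)]
  · exact sum_eq_zero fun i hi => if_neg (by rw [mem_range] at hi; omega)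

lemma coeff_mul_seqPoly (φ : D[X]) (m : ℕ) :
    (φ * seqPoly n s).coeff m = ∑ j ∈ range (φ.natDegree + 1),
      if j ≤ m ∧ m - j < n then φ.coeff j * s (n - 1 - (m - j)) else 0 := by
  conv_lhs => rw [φ.as_sum_range_C_mul_X_pow]
  simp only [sum_mul, finsetSum_coeff, mul_assoc, coeff_C_mul, coeff_X_pow_mul', coeff_seqPoly]
  refine sum_congr rfl fun j _ => ?_
  by_cases hj : j ≤ m <;> by_cases hmj : m - j < n <;> simp [hj, hmj]

lemma coeff_mul_seqPoly_of_natDegree_le {φ : D[X]} {m : ℕ} (hφ : φ.natDegree ≤ m) (hm : m < n) :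
    (φ * seqPoly n s).coeff m
      = ∑ j ∈ range (φ.natDegree + 1), φ.coeff j * s (n - 1 - m + j) := by
  rw [coeff_mul_seqPoly]
  refine sum_congr rfl fun j hj => ?_
  rw [mem_range] at hj
  rw [if_pos (by omega), show n - 1 - (m - j) = n - 1 - m + j by omega]

lemma annCond_iff_coeff_mul_seqPoly {φ : D[X]} :
    AnnCond n s φ ↔ ∀ m, φ.natDegree ≤ m → m < n → (φ * seqPoly n s).coeff m = 0 := by
  constructor
  · intro h m hφ hm
    rw [coeff_mul_seqPoly_of_natDegree_le hφ hm]
    exact h (n - 1 - m) (by omega)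
  · intro h t ht
    have := h (n - 1 - t) (by omega) (by omega)
    rwa [coeff_mul_seqPoly_of_natDegree_le (by omega) (by omega),
      show n - 1 - (n - 1 - t) = t by omega] at this

lemma coeff_seqResidual_of_lt (φ ψ : D[X]) {k : ℕ} (hk : k < n) :
    (seqResidual n s φ ψ).coeff k = (φ * seqPoly n s).coeff k := by
  simp [seqResidual, coeff_X_pow_mul', hk.not_ge]

lemma coeff_seqResidual_of_le {φ ψ : D[X]} (h : SeqNum n s φ ψ) {k : ℕ} (hk : n ≤ k) :
    (seqResidual n s φ ψ).coeff k = 0 := by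
  obtain ⟨k, rfl⟩ := Nat.exists_eq_add_of_le' hk
  rw [seqResidual, coeff_sub, coeff_X_pow_mul, h, coeff_mul_seqPoly, sub_eq_zero]
  refine sum_congr rfl fun j _ => ?_
  by_cases hj : k + 1 ≤ j ∧ j - (k + 1) < n
  · rw [if_pos (by omega), if_pos hj, show n - 1 - (k + n - j) = j - (k + 1) by omega]
  · rw [if_neg (by omega), if_neg hj]

lemma degree_seqResidual_lt_iff_annCond {φ ψ : D[X]} (h : SeqNum n s φ ψ) :
    (seqResidual n s φ ψ).degree < φ.natDegree ↔ AnnCond n s φ := by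
  rw [degree_lt_iff_coeff_zero, annCond_iff_coeff_mul_seqPoly]
  refine ⟨fun hr m hφ hm => ?_, fun hann k hk => ?_⟩
  · rw [← coeff_seqResidual_of_lt φ ψ hm]
    exact hr m hφ
  · rcases lt_or_ge k n with hkn | hkn
    · rw [coeff_seqResidual_of_lt φ ψ hkn]
      exact hann k hk hkn
    · exact coeff_seqResidual_of_le h hkn

lemma annihilates_iff_degree_seqResidual_lt {φ ψ : D[X]} (h : SeqNum n s φ ψ) :
    Annihilates n s φ ↔ φ ≠ 0 ∧ (seqResidual n s φ ψ).degree < φ.natDegree :=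
  and_congr_right' (degree_seqResidual_lt_iff_annCond h).symm

lemma eq_zero_of_seqNum_zero {ψ : D[X]} (h : SeqNum n s 0 ψ) : ψ = 0 := by
  ext k
  simp [h k]

lemma X_pow_mul_pairing (f₁ f₂ g₁ g₂ : D[X]) :
    X ^ n * (f₂ * g₁ - f₁ * g₂) = f₁ * seqResidual n s g₁ g₂ - g₁ * seqResidual n s f₁ f₂ := by
  simp only [seqResidual]
  ring

end SequencePolynomial

section Degree

variable {R : Type*} [Semiring R] {p q : R[X]}

lemma degree_mul_lt_of_natDegree_le_of_degree_lt {a b : ℕ} (hp : p.natDegree ≤ a)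
    (hq : q.degree < b) : (p * q).degree < ↑(a + b) := by
  rcases eq_or_ne q 0 with rfl | hq0
  · simp
  · rw [← natDegree_lt_iff_degree_lt hq0] at hq
    exact degree_le_natDegree.trans_lt (by exact_mod_cast natDegree_mul_le.trans_lt (by omega))

lemma degree_X_pow_mul_lt_iff [Nontrivial R] {n k : ℕ} :
    (X ^ n * p).degree < ↑k ↔ p = 0 ∨ p.natDegree + n < k := by
  rcases eq_or_ne p 0 with rfl | hp
  · simp
  · rw [← natDegree_lt_iff_degree_lt ((monic_X_pow n).mul_right_ne_zero hp),
      (monic_X_pow n).natDegree_mul' hp]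
    simp only [natDegree_X_pow, hp, false_or]
    omega

end Degree

section MinimalSystem

variable {D : Type*} [CommRing D] [IsDomain D] {n : ℕ} {s : ℕ → D}
  {lam₁ lam₂ lam'₁ lam'₂ f₁ f₂ : D[X]} {nabla : D}

lemma seqResidual_ne_zero_and_natDegree_add_eq (hlam : IsSolution n s lam₁ lam₂)
    (hdeg : lam₁.natDegree + lam'₁.natDegree ≤ n) (hnabla : nabla ≠ 0)
    (hB : lam₂ * lam'₁ - lam₁ * lam'₂ = C nabla) :
    seqResidual n s lam'₁ lam'₂ ≠ 0 ∧
      lam₁.natDegree + (seqResidual n s lam'₁ lam'₂).natDegree = n := by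
  obtain ⟨hlam0, hρ⟩ := (annihilates_iff_degree_seqResidual_lt hlam.2).1 hlam.1
  set g := seqResidual n s lam'₁ lam'₂
  have hid : lam₁ * g = C nabla * X ^ n + lam'₁ * seqResidual n s lam₁ lam₂ := by
    rw [← X_pow_mul_C, ← hB, X_pow_mul_pairing]
    ring
  have hsmall : (lam'₁ * seqResidual n s lam₁ lam₂).degree < (C nabla * X ^ n).degree := by
    rw [degree_C_mul_X_pow n hnabla]
    exact (degree_mul_lt_of_natDegree_le_of_degree_lt le_rfl hρ).trans_le
      (by exact_mod_cast (by omega))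
  have hprod : (lam₁ * g).degree = n := by
    rw [hid, degree_add_eq_left_of_degree_lt hsmall, degree_C_mul_X_pow n hnabla]
  have hg : g ≠ 0 := by
    rintro h
    simp [h] at hprod
  exact ⟨hg, natDegree_mul hlam0 hg ▸ natDegree_eq_of_degree_eq_some hprod⟩

lemma pairing_ne_zero_and_natDegree_add_eq (hlam : IsSolution n s lam₁ lam₂)
    (hdeg : lam₁.natDegree + lam'₁.natDegree ≤ n) (hnabla : nabla ≠ 0)
    (hB : lam₂ * lam'₁ - lam₁ * lam'₂ = C nabla) (hf : Annihilates n s f₁)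
    (hf₂ : SeqNum n s f₁ f₂) :
    f₂ * lam'₁ - f₁ * lam'₂ ≠ 0 ∧
      (f₂ * lam'₁ - f₁ * lam'₂).natDegree + lam₁.natDegree = f₁.natDegree := by
  obtain ⟨hg, hgdeg⟩ := seqResidual_ne_zero_and_natDegree_add_eq hlam hdeg hnabla hB
  obtain ⟨hf0, hr⟩ := (annihilates_iff_degree_seqResidual_lt hf₂).1 hf
  set g := seqResidual n s lam'₁ lam'₂
  have hfg : (f₁ * g).degree = ↑(f₁.natDegree + g.natDegree) := by
    rw [degree_mul, degree_eq_natDegree hf0, degree_eq_natDegree hg, Nat.cast_add]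
  have hsmall : (lam'₁ * seqResidual n s f₁ f₂).degree < (f₁ * g).degree := by
    rw [hfg]
    exact (degree_mul_lt_of_natDegree_le_of_degree_lt le_rfl hr).trans_le
      (by exact_mod_cast (by omega))
  have hXm : (X ^ n * (f₂ * lam'₁ - f₁ * lam'₂)).degree = ↑(f₁.natDegree + g.natDegree) := by
    rw [X_pow_mul_pairing, degree_sub_eq_left_of_degree_lt hsmall, hfg]
  have hm : f₂ * lam'₁ - f₁ * lam'₂ ≠ 0 := by
    rintro h
    rw [h, mul_zero, degree_zero] at hXm
    exact WithBot.bot_ne_coe hXm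
  have hnat := natDegree_eq_of_degree_eq_some hXm
  rw [(monic_X_pow n).natDegree_mul' hm, natDegree_X_pow] at hnat
  exact ⟨hm, by omega⟩

lemma pairing_eq_zero_or_natDegree_lt (hlam : IsSolution n s lam₁ lam₂)
    (hf : Annihilates n s f₁) (hf₂ : SeqNum n s f₁ f₂) :
    f₂ * lam₁ - f₁ * lam₂ = 0 ∨
      ((f₂ * lam₁ - f₁ * lam₂).natDegree : ℤ) + n + 1 ≤ f₁.natDegree + lam₁.natDegree := by
  obtain ⟨-, hρ⟩ := (annihilates_iff_degree_seqResidual_lt hlam.2).1 hlam.1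
  obtain ⟨-, hr⟩ := (annihilates_iff_degree_seqResidual_lt hf₂).1 hf
  have hXm : (X ^ n * (f₂ * lam₁ - f₁ * lam₂)).degree < ↑(f₁.natDegree + lam₁.natDegree) := by
    rw [X_pow_mul_pairing]
    refine (degree_sub_le _ _).trans_lt (max_lt ?_ ?_)
    · exact degree_mul_lt_of_natDegree_le_of_degree_lt le_rfl hρ
    · rw [add_comm]
      exact degree_mul_lt_of_natDegree_le_of_degree_lt le_rfl hr
  exact (degree_X_pow_mul_lt_iff.1 hXm).imp_right (by omega)

lemma annihilates_of_pairing_degrees (hlam : IsSolution n s lam₁ lam₂)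
    (hm' : f₂ * lam'₁ - f₁ * lam'₂ ≠ 0)
    (hm : f₂ * lam₁ - f₁ * lam₂ = 0 ∨
      ((f₂ * lam₁ - f₁ * lam₂).natDegree : ℤ) + n + 1 ≤ f₁.natDegree + lam₁.natDegree)
    (hf₂ : SeqNum n s f₁ f₂) : Annihilates n s f₁ := by
  obtain ⟨hlam0, hρ⟩ := (annihilates_iff_degree_seqResidual_lt hlam.2).1 hlam.1
  have hf0 : f₁ ≠ 0 := by
    rintro rfl
    obtain rfl := eq_zero_of_seqNum_zero hf₂
    simp at hm'
  have hXm : (X ^ n * (f₂ * lam₁ - f₁ * lam₂)).degree < ↑(f₁.natDegree + lam₁.natDegree) :=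
    degree_X_pow_mul_lt_iff.2 (hm.imp_right (by omega))
  have hlamr : (lam₁ * seqResidual n s f₁ f₂).degree < ↑(lam₁.natDegree + f₁.natDegree) := by
    have hid : lam₁ * seqResidual n s f₁ f₂
        = f₁ * seqResidual n s lam₁ lam₂ - X ^ n * (f₂ * lam₁ - f₁ * lam₂) := by
      rw [X_pow_mul_pairing]
      ring
    rw [add_comm, hid]
    exact (degree_sub_le _ _).trans_lt
      (max_lt (degree_mul_lt_of_natDegree_le_of_degree_lt le_rfl hρ) hXm)
  rw [degree_mul, degree_eq_natDegree hlam0, Nat.cast_add] at hlamr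
  exact (annihilates_iff_degree_seqResidual_lt hf₂).2 ⟨hf0, lt_of_add_lt_add_left hlamr⟩

end MinimalSystem

open Polynomial in
theorem annihilates_iff_pairing_degrees_general {D : Type*} [CommRing D] [IsDomain D]
    (n : ℕ) (s : ℕ → D)
    (n' : ℕ) (hn'n : n' < n)
    (lam₁ lam₂ lam'₁ lam'₂ : Polynomial D)
    (hlam : IsSolution n s lam₁ lam₂) (hlamdeg : lam₁.natDegree = LC n s)
    (hlam'deg : lam'₁.natDegree = LC n' s)
    (hLL' : LC n s + LC n' s = n' + 1)
    (nabla : D) (hnabla : nabla ≠ 0)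
    (hB : lam₂ * lam'₁ - lam₁ * lam'₂ = C nabla)
    (f₁ f₂ : Polynomial D) (hf₂ : SeqNum n s f₁ f₂) :
    Annihilates n s f₁ ↔
      ((f₂ * lam'₁ - f₁ * lam'₂ ≠ 0 ∧
          (f₂ * lam'₁ - f₁ * lam'₂).natDegree + LC n s = f₁.natDegree) ∧
        (f₂ * lam₁ - f₁ * lam₂ = 0 ∨
          ((f₂ * lam₁ - f₁ * lam₂).natDegree : ℤ) + n + 1 ≤
            (f₁.natDegree : ℤ) + LC n s)) := by
  have hdeg : lam₁.natDegree + lam'₁.natDegree ≤ n := by omega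
  rw [← hlamdeg]
  refine ⟨fun hf => ⟨?_, ?_⟩, fun ⟨⟨hm', _⟩, hm⟩ => annihilates_of_pairing_degrees hlam hm' hm hf₂⟩
  · exact pairing_ne_zero_and_natDegree_add_eq hlam hdeg hnabla hB hf hf₂
  · exact pairing_eq_zero_or_natDegree_lt hlam hf hf₂

open Polynomial in
/-- Characterisation of annihilating polynomials via a minimal system for an
essential sequence: `f₁ ∈ Ann(s)^×` iff `deg m' = deg f₁ − L` and
`deg m ≤ deg f₁ + L − n − 1` (with `deg 0 = −∞`). -/
theorem annihilates_iff_pairing_degrees {D : Type*} [CommRing D] [IsDomain D]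
    (n : ℕ) (hn : 2 ≤ n) (s : ℕ → D)
    (hess : LC 1 s < LC n s)
    (n' : ℕ) (hn'1 : 1 ≤ n') (hn'n : n' < n)
    (hn'lt : LC n' s < LC n s) (hn'max : ∀ j, n' < j → j < n → LC n s ≤ LC j s)
    (lam₁ lam₂ lam'₁ lam'₂ : Polynomial D)
    (hlam : IsSolution n s lam₁ lam₂) (hlamdeg : lam₁.natDegree = LC n s)
    (hlam' : IsSolution n' s lam'₁ lam'₂) (hlam'deg : lam'₁.natDegree = LC n' s)
    (hLL' : LC n s + LC n' s = n' + 1)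
    (nabla : D) (hnabla : nabla ≠ 0)
    (hB : lam₂ * lam'₁ - lam₁ * lam'₂ = C nabla)
    (f₁ f₂ : Polynomial D) (hf₂ : SeqNum n s f₁ f₂) :
    Annihilates n s f₁ ↔
      ((f₂ * lam'₁ - f₁ * lam'₂ ≠ 0 ∧
          (f₂ * lam'₁ - f₁ * lam'₂).natDegree + LC n s = f₁.natDegree) ∧
        (f₂ * lam₁ - f₁ * lam₂ = 0 ∨
          ((f₂ * lam₁ - f₁ * lam₂).natDegree : ℤ) + n + 1 ≤
            (f₁.natDegree : ℤ) + LC n s)) :=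
  annihilates_iff_pairing_degrees_general n s n' hn'n lam₁ lam₂ lam'₁ lam'₂ hlam hlamdeg hlam'deg
    hLL' nabla hnabla hB f₁ f₂ hf₂
end

section
/- Let F be a field, n ≥ 2, and s = S|n an essential initial segment of an infinite sequence S over F, with n ∈ [n_i, n_{i+1}) and partial quotients q = q^{(i)}, q' = q^{(i-1)} of S̄. Let e_s = n + 1 − 2·LC_n. Then the set of nonzero annihilating polynomials of s is exactly {φ' q_1 − φ q'_1 : φ' ≠ 0, deg φ ≤ deg φ' − e_s}, and the set of minimal polynomials of s is exactly {φ' q_1 − φ q'_1 : φ' ∈ F^×, deg φ ≤ −e_s}. -/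
/-!
Work in `F((x⁻¹))` (a `LaurentSeries` in the variable `x⁻¹`, so `orderTop` is minus the
`x`-degree) and put `R(q) = q₁ b₀ - q₂` for a pair `q = (q₁, q₂)`, where `b₀ = x⁻¹ S̄`.
A nonzero `f` annihilates `S|n` exactly when `f b₀` is a polynomial up to an error of order
`> n - deg f`. The continued-fraction recursion gives `R(q^{(j)}) = -b_j R(q^{(j-1)})`, hence
`R(q^{(i-1)})` has order exactly `deg q^{(i)}₁`, and for `n ∈ [n_i, n_{i+1})` the order of
`R(q^{(i)})` is at least `n + 1 - deg q^{(i)}₁`. This makes every `φ' q₁ - φ q'₁` with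
`deg φ ≤ deg φ' - e_s` an annihilator. Conversely, since `q₁ q'₂ - q₂ q'₁ = ±1`, Cramer's rule
writes any annihilator `f` as `φ' q₁ - φ q'₁`, where `φ'` and `φ` are, up to sign,
`f R(q') - q'₁ G` and `f R(q) - q₁ G` for the small error `G` of `f b₀`; reading off their
orders gives `deg φ' = deg f - deg q₁` and the bound on `deg φ`. In particular
`LC_n = deg q₁`, and the minimal polynomials are the case `deg φ' = 0`.
-/

namespace LinearComplexity

open Polynomial HahnSeries

variable {F : Type*} [Field F]

section toL

theorem toL_eq_eval₂ (p : F[X]) :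
    toL p = p.eval₂ (HahnSeries.C : F →+* LaurentSeries F) (single (-1 : ℤ) 1) := by
  rw [eval₂_eq_sum_range, toL]
  refine Finset.sum_congr rfl fun k _ => ?_
  rw [single_pow, HahnSeries.C_apply, single_mul_single]
  simp

@[simp] theorem toL_zero : toL (0 : F[X]) = 0 := by simp [toL_eq_eval₂]

@[simp] theorem toL_one : toL (1 : F[X]) = 1 := by simp [toL_eq_eval₂]

@[simp] theorem toL_add (p q : F[X]) : toL (p + q) = toL p + toL q := by
  simp [toL_eq_eval₂]

@[simp] theorem toL_mul (p q : F[X]) : toL (p * q) = toL p * toL q := by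
  simp [toL_eq_eval₂]

@[simp] theorem toL_sub (p q : F[X]) : toL (p - q) = toL p - toL q := by
  simp [toL_eq_eval₂]

theorem coeff_toL_neg_natCast (p : F[X]) (k : ℕ) : (toL p).coeff (-k) = p.coeff k := by
  simp only [toL, HahnSeries.coeff_sum, coeff_single, neg_inj, Nat.cast_inj]
  rw [Finset.sum_ite_eq]
  split_ifs with hk
  · rfl
  · exact (coeff_eq_zero_of_natDegree_lt (by simpa using hk)).symm

theorem coeff_toL_of_nonpos (p : F[X]) {e : ℤ} (he : e ≤ 0) :
    (toL p).coeff e = p.coeff (-e).toNat := by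
  rw [← coeff_toL_neg_natCast, Int.toNat_of_nonneg (by omega), neg_neg]

theorem coeff_toL_of_pos (p : F[X]) {e : ℤ} (he : 0 < e) : (toL p).coeff e = 0 := by
  simp only [toL, HahnSeries.coeff_sum, coeff_single]
  exact Finset.sum_eq_zero fun k _ => if_neg (by omega)

theorem orderTop_toL {p : F[X]} (hp : p ≠ 0) : (toL p).orderTop = (-p.natDegree : ℤ) := by
  refine le_antisymm (orderTop_le_of_coeff_ne_zero ?_) (le_orderTop_iff_forall.2 fun e he => ?_)
  · rwa [coeff_toL_neg_natCast, ← Polynomial.leadingCoeff, Polynomial.leadingCoeff_ne_zero]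
  · have he : e < -(p.natDegree : ℤ) := WithTop.coe_lt_coe.1 he
    rw [coeff_toL_of_nonpos p (by omega)]
    exact coeff_eq_zero_of_natDegree_lt (by omega)

theorem le_orderTop_toL (p : F[X]) : ((-p.natDegree : ℤ) : WithTop ℤ) ≤ (toL p).orderTop := by
  rcases eq_or_ne p 0 with rfl | hp
  · simp
  · rw [orderTop_toL hp]

theorem natDegree_le_of_le_orderTop_toL {p : F[X]} (hp : p ≠ 0) {m : ℤ}
    (h : (m : WithTop ℤ) ≤ (toL p).orderTop) : (p.natDegree : ℤ) ≤ -m := by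
  rw [orderTop_toL hp, WithTop.coe_le_coe] at h
  omega

theorem coeff_toL_mul (p : F[X]) (L : LaurentSeries F) (e : ℤ) :
    (toL p * L).coeff e = ∑ j ∈ Finset.range (p.natDegree + 1), p.coeff j * L.coeff (e + j) := by
  simp only [toL, Finset.sum_mul, HahnSeries.coeff_sum, coeff_single_mul, sub_neg_eq_add]

theorem coeff_polPart (L : LaurentSeries F) (k : ℕ) : (polPart L).coeff k = L.coeff (-k) := by
  simp only [polPart, finsetSum_coeff, coeff_C_mul_X_pow]
  rw [Finset.sum_ite_eq]
  split_ifs with hk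
  · rfl
  · refine (coeff_eq_zero_of_lt_order ?_).symm
    simp only [Finset.mem_range, not_lt] at hk
    omega

theorem coeff_toL_polPart (L : LaurentSeries F) {e : ℤ} (he : e ≤ 0) :
    (toL (polPart L)).coeff e = L.coeff e := by
  rw [coeff_toL_of_nonpos _ he, coeff_polPart, Int.toNat_of_nonneg (by omega), neg_neg]

end toL

theorem order_inv {b : LaurentSeries F} (hb : b ≠ 0) : b⁻¹.order = -b.order := by
  have h := HahnSeries.order_mul hb (inv_ne_zero hb)
  rw [mul_inv_cancel₀ hb, order_one] at h
  omega

section ContinuedFraction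

variable {S : ℕ → F}

theorem cfB_succ (S : ℕ → F) (j : ℕ) : cfB S (j + 1) = (cfB S j)⁻¹ - toL (cfA S j) := rfl

theorem coeff_cfB_zero (S : ℕ → F) (t : ℕ) : (cfB S 0).coeff (t + 1) = S t := by
  rw [cfB, sbar, coeff_single_mul, add_sub_cancel_right, one_mul, ofPowerSeries_apply_coeff,
    PowerSeries.coeff_mk]

theorem one_le_orderTop_cfB (S : ℕ → F) (j : ℕ) : 1 ≤ (cfB S j).orderTop := by
  refine le_orderTop_iff_forall.2 fun e he => ?_
  have he : e ≤ 0 := by exact_mod_cast Order.le_of_lt_add_one (by simpa using he)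
  cases j with
  | zero =>
    rw [cfB, sbar, coeff_single_mul, PowerSeries.coeff_coe, if_pos (by omega), mul_zero]
  | succ j => rw [cfB_succ, HahnSeries.coeff_sub, cfA, coeff_toL_polPart _ he, sub_self]

theorem polPart_zero : polPart (0 : LaurentSeries F) = 0 := by
  ext k
  simp [coeff_polPart]

theorem cfB_eq_zero_of_le {j k : ℕ} (h : cfB S j = 0) (hjk : j ≤ k) : cfB S k = 0 := by
  induction k, hjk using Nat.le_induction with
  | base => exact h
  | succ k _ ih => rw [cfB_succ, cfA, ih, inv_zero, polPart_zero, toL_zero, sub_zero]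

theorem cfB_ne_zero_of_lt {i : ℕ} (h : cfB S (i - 1) ≠ 0) {k : ℕ} (hk : k < i) :
    cfB S k ≠ 0 :=
  fun hk0 => h (cfB_eq_zero_of_le hk0 (by omega))

theorem order_cfB_eq_natDegree_cfA {j : ℕ} (hb : cfB S j ≠ 0) :
    (cfB S j).order = (cfA S j).natDegree := by
  have hpos : 1 ≤ (cfB S j).order := by
    have := one_le_orderTop_cfB S j
    rwa [← order_eq_orderTop_of_ne_zero hb, ← WithTop.coe_one, WithTop.coe_le_coe] at this
  have hinv : (cfB S j)⁻¹.orderTop = (-(cfB S j).order : ℤ) := by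
    rw [← order_inv hb, order_eq_orderTop_of_ne_zero (inv_ne_zero hb)]
  have hlt : (cfB S j)⁻¹.orderTop < (cfB S (j + 1)).orderTop :=
    lt_of_lt_of_le (by rw [hinv]; exact_mod_cast (by omega : -(cfB S j).order < 1))
      (one_le_orderTop_cfB S (j + 1))
  have ha : (toL (cfA S j)).orderTop = (cfB S j)⁻¹.orderTop := by
    rw [← orderTop_sub hlt, cfB_succ, sub_sub_cancel]
  have ha0 : cfA S j ≠ 0 := by
    rintro h
    rw [h, toL_zero, orderTop_zero, hinv] at ha
    exact WithTop.top_ne_coe ha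
  rw [orderTop_toL ha0, hinv, WithTop.coe_eq_coe] at ha
  omega

theorem natDegree_mul_sub_mul {φ φ' q q' : F[X]} (hφ' : φ' ≠ 0) (hq : q ≠ 0)
    (h : φ = 0 ∨ φ.natDegree + q'.natDegree < φ'.natDegree + q.natDegree) :
    φ' * q - φ * q' ≠ 0 ∧ (φ' * q - φ * q').natDegree = φ'.natDegree + q.natDegree := by
  have hlt : (φ * q').degree < (φ' * q).degree := by
    rcases h with rfl | h
    · rw [zero_mul, degree_zero, bot_lt_iff_ne_bot, Ne, degree_eq_bot]
      exact mul_ne_zero hφ' hq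
    · refine degree_lt_degree ?_
      have := natDegree_mul_le (p := φ) (q := q')
      rw [natDegree_mul hφ' hq]
      omega
  have hdeg := degree_sub_eq_left_of_degree_lt hlt
  refine ⟨?_, by rw [natDegree_eq_of_degree_eq hdeg, natDegree_mul hφ' hq]⟩
  rw [Ne, ← degree_eq_bot, hdeg, degree_eq_bot]
  exact mul_ne_zero hφ' hq

theorem natDegree_mul_add_of_natDegree_le {a q r : F[X]} (ha : 1 ≤ a.natDegree) (hq : q ≠ 0)
    (hr : r.natDegree ≤ q.natDegree) : (a * q + r).natDegree = a.natDegree + q.natDegree := by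
  have ha0 : a ≠ 0 := by rintro rfl; simp at ha
  rw [natDegree_add_eq_left_of_natDegree_lt] <;> rw [natDegree_mul ha0 hq]
  omega

theorem one_le_natDegree_cfA {j : ℕ} (hb : cfB S j ≠ 0) : 1 ≤ (cfA S j).natDegree := by
  have h := one_le_orderTop_cfB S j
  rw [← order_eq_orderTop_of_ne_zero hb, order_cfB_eq_natDegree_cfA hb] at h
  exact_mod_cast h

theorem cfQ_snd_fst_ne_zero {j : ℕ} (hb : ∀ k < j, cfB S k ≠ 0) :
    (cfQ S j).2.1 ≠ 0 ∧ (cfQ S j).1.1.natDegree ≤ (cfQ S j).2.1.natDegree := by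
  induction j with
  | zero => simp [cfQ]
  | succ j ih =>
    obtain ⟨hq, hle⟩ := ih fun k hk => hb k (by omega)
    have ha := one_le_natDegree_cfA (hb j j.lt_succ_self)
    have hdeg := natDegree_mul_add_of_natDegree_le ha hq hle
    refine ⟨fun h0 => ?_, ?_⟩
    · have : (cfQ S (j + 1)).2.1.natDegree = 0 := by rw [h0, natDegree_zero]
      simp only [cfQ] at this
      omega
    · simp only [cfQ, hdeg]
      omega

theorem natDegree_cfQ_succ {j : ℕ} (hb : ∀ k < j + 1, cfB S k ≠ 0) :
    ((cfQ S (j + 1)).2.1.natDegree : ℤ) = (cfB S j).order + (cfQ S j).2.1.natDegree := by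
  obtain ⟨hq, hle⟩ := cfQ_snd_fst_ne_zero (j := j) fun k hk => hb k (by omega)
  have hbj := hb j j.lt_succ_self
  simp only [cfQ, natDegree_mul_add_of_natDegree_le (one_le_natDegree_cfA hbj) hq hle,
    order_cfB_eq_natDegree_cfA hbj, Nat.cast_add]

theorem det_cfQ (S : ℕ → F) (j : ℕ) :
    (cfQ S j).2.1 * (cfQ S j).1.2 - (cfQ S j).2.2 * (cfQ S j).1.1 = (-1) ^ j := by
  induction j with
  | zero => simp [cfQ]
  | succ j ih =>
    simp only [cfQ, pow_succ]
    linear_combination (-1 : F[X]) * ih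

theorem eq_sub_of_det {R : Type*} [CommRing R] {q q' r r' ε : R} (f g : R)
    (hdet : q * r' - r * q' = ε) (hε : ε * ε = 1) :
    f = ε * (f * r' - g * q') * q - ε * (f * r - g * q) * q' := by
  linear_combination (-(ε * f)) * hdet + (-f) * hε

noncomputable def remainder (S : ℕ → F) (q : F[X] × F[X]) : LaurentSeries F :=
  toL q.1 * cfB S 0 - toL q.2

theorem remainder_cfQ_succ_snd (S : ℕ → F) (j : ℕ) :
    remainder S (cfQ S (j + 1)).2 =
      toL (cfA S j) * remainder S (cfQ S j).2 + remainder S (cfQ S j).1 := by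
  simp only [remainder, cfQ, toL_add, toL_mul]
  ring

theorem remainder_cfQ_snd {j : ℕ} (hb : ∀ k < j, cfB S k ≠ 0) :
    remainder S (cfQ S j).2 = -cfB S j * remainder S (cfQ S j).1 := by
  induction j with
  | zero => simp [remainder, cfQ]
  | succ j ih =>
    have hbj := hb j j.lt_succ_self
    have ih := ih fun k hk => hb k (by omega)
    have hprev : remainder S (cfQ S j).1 = -(cfB S j)⁻¹ * remainder S (cfQ S j).2 := by
      rw [ih, ← mul_assoc, neg_mul_neg, inv_mul_cancel₀ hbj, one_mul]
    change _ = -cfB S (j + 1) * remainder S (cfQ S j).2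
    rw [remainder_cfQ_succ_snd, hprev, cfB_succ]
    ring

theorem orderTop_remainder_cfQ_fst {j : ℕ} (hb : ∀ k < j, cfB S k ≠ 0) :
    (remainder S (cfQ S j).1).orderTop = ((cfQ S j).2.1.natDegree : ℤ) := by
  induction j with
  | zero => simp [remainder, cfQ]
  | succ j ih =>
    have hbj := hb j j.lt_succ_self
    change (remainder S (cfQ S j).2).orderTop = _
    rw [remainder_cfQ_snd fun k hk => hb k (by omega), orderTop_mul, orderTop_neg,
      ih fun k hk => hb k (by omega), ← order_eq_orderTop_of_ne_zero hbj, ← WithTop.coe_add,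
      natDegree_cfQ_succ hb]

theorem le_orderTop_remainder_cfQ_snd {i n : ℕ} (hb : ∀ k < i, cfB S k ≠ 0)
    (hni1 : cfB S i = 0 ∨ n < (cfQ S (i + 1)).1.1.natDegree + (cfQ S (i + 1)).2.1.natDegree) :
    ((n + 1 - (cfQ S i).2.1.natDegree : ℤ) : WithTop ℤ) ≤
      (remainder S (cfQ S i).2).orderTop := by
  by_cases hbi : cfB S i = 0
  · simp [remainder_cfQ_snd hb, hbi]
  have hb' : ∀ k < i + 1, cfB S k ≠ 0 := fun k hk =>
    (Nat.lt_succ_iff_lt_or_eq.1 hk).elim (hb k) fun h => h ▸ hbi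
  have hn : n < (cfQ S i).2.1.natDegree + (cfQ S (i + 1)).2.1.natDegree := hni1.resolve_left hbi
  change _ ≤ (remainder S (cfQ S (i + 1)).1).orderTop
  rw [orderTop_remainder_cfQ_fst hb']
  exact WithTop.coe_le_coe.2 (by omega)

end ContinuedFraction

section Annihilators

theorem coeff_toL_mul_cfB_zero (S : ℕ → F) (f : F[X]) (t : ℕ) :
    (toL f * cfB S 0).coeff (t + 1) =
      ∑ j ∈ Finset.range (f.natDegree + 1), f.coeff j * S (t + j) := by
  rw [coeff_toL_mul]
  refine Finset.sum_congr rfl fun j _ => ?_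
  rw [show (t : ℤ) + 1 + j = ((t + j : ℕ) : ℤ) + 1 by push_cast; ring, coeff_cfB_zero]

theorem annCond_iff_exists_le_orderTop (n : ℕ) (S : ℕ → F) (f : F[X]) :
    AnnCond n S f ↔ ∃ g : F[X],
      ((n + 1 - f.natDegree : ℤ) : WithTop ℤ) ≤ (toL f * cfB S 0 - toL g).orderTop := by
  constructor
  · intro h
    refine ⟨polPart (toL f * cfB S 0), le_orderTop_iff_forall.2 fun e he => ?_⟩
    have he : e < n + 1 - f.natDegree := WithTop.coe_lt_coe.1 he
    rw [HahnSeries.coeff_sub]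
    rcases le_or_gt e 0 with he0 | he0
    · rw [coeff_toL_polPart _ he0, sub_self]
    · obtain ⟨t, rfl⟩ : ∃ t : ℕ, e = t + 1 := ⟨(e - 1).toNat, by omega⟩
      rw [coeff_toL_of_pos _ he0, sub_zero, coeff_toL_mul_cfB_zero]
      exact h t (by omega)
  · rintro ⟨g, hg⟩ t ht
    have h := coeff_eq_zero_of_lt_orderTop
      (lt_of_lt_of_le (WithTop.coe_lt_coe.2 (by omega : (t : ℤ) + 1 < n + 1 - f.natDegree)) hg)
    rwa [HahnSeries.coeff_sub, coeff_toL_of_pos _ (by omega), sub_zero,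
      coeff_toL_mul_cfB_zero] at h

variable {S : ℕ → F} {i n : ℕ}

theorem annihilates_of_natDegree_le (hb : ∀ k < i, cfB S k ≠ 0)
    (hni : (cfQ S i).1.1.natDegree + (cfQ S i).2.1.natDegree ≤ n)
    (hni1 : cfB S i = 0 ∨ n < (cfQ S (i + 1)).1.1.natDegree + (cfQ S (i + 1)).2.1.natDegree)
    {φ φ' : F[X]} (hφ' : φ' ≠ 0)
    (hφ : φ = 0 ∨ φ.natDegree + n + 1 ≤ φ'.natDegree + 2 * (cfQ S i).2.1.natDegree) :
    Annihilates n S (φ' * (cfQ S i).2.1 - φ * (cfQ S i).1.1) ∧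
      (φ' * (cfQ S i).2.1 - φ * (cfQ S i).1.1).natDegree =
        φ'.natDegree + (cfQ S i).2.1.natDegree := by
  set q := (cfQ S i).2.1 with hq_def
  set q' := (cfQ S i).1.1
  have hlt : φ = 0 ∨ φ.natDegree + q'.natDegree < φ'.natDegree + q.natDegree :=
    hφ.imp_right fun h => by omega
  obtain ⟨hf0, hnatDeg⟩ := natDegree_mul_sub_mul hφ' (cfQ_snd_fst_ne_zero hb).1 hlt
  refine ⟨⟨hf0, (annCond_iff_exists_le_orderTop n S _).2
    ⟨φ' * (cfQ S i).2.2 - φ * (cfQ S i).1.2, ?_⟩⟩, hnatDeg⟩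
  have hid : toL (φ' * q - φ * q') * cfB S 0 - toL (φ' * (cfQ S i).2.2 - φ * (cfQ S i).1.2) =
      toL φ' * remainder S (cfQ S i).2 - toL φ * remainder S (cfQ S i).1 := by
    simp only [remainder, toL_sub, toL_mul]
    ring
  rw [hid, hnatDeg]
  refine le_trans (le_min ?_ ?_) min_orderTop_le_orderTop_sub
  · rw [orderTop_mul, orderTop_toL hφ']
    calc (((n + 1 - (φ'.natDegree + q.natDegree : ℕ)) : ℤ) : WithTop ℤ)
        = ((-φ'.natDegree : ℤ) : WithTop ℤ) + ((n + 1 - q.natDegree : ℤ) : WithTop ℤ) := by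
          rw [← WithTop.coe_add]; congr 1; push_cast; ring
      _ ≤ _ := add_le_add_right (le_orderTop_remainder_cfQ_snd hb hni1) _
  · rcases hφ with rfl | hφ
    · simp
    rw [orderTop_mul, orderTop_remainder_cfQ_fst hb, ← hq_def]
    refine le_trans ?_ (add_le_add_left (le_orderTop_toL φ) _)
    rw [← WithTop.coe_add]
    exact WithTop.coe_le_coe.2 (by push_cast; omega)

theorem orderTop_toL_mul_remainder_fst_sub (hb : ∀ k < i, cfB S k ≠ 0)
    (hni : (cfQ S i).1.1.natDegree + (cfQ S i).2.1.natDegree ≤ n)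
    {f : F[X]} (hf0 : f ≠ 0) {G : LaurentSeries F}
    (hG : ((n + 1 - f.natDegree : ℤ) : WithTop ℤ) ≤ G.orderTop) :
    (toL f * remainder S (cfQ S i).1 - toL (cfQ S i).1.1 * G).orderTop =
      (((cfQ S i).2.1.natDegree - f.natDegree : ℤ) : WithTop ℤ) := by
  have hlead : (toL f * remainder S (cfQ S i).1).orderTop =
      (((cfQ S i).2.1.natDegree - f.natDegree : ℤ) : WithTop ℤ) := by
    rw [orderTop_mul, orderTop_toL hf0, orderTop_remainder_cfQ_fst hb, ← WithTop.coe_add]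
    congr 1
    ring
  have htail : (((cfQ S i).2.1.natDegree - f.natDegree : ℤ) : WithTop ℤ) <
      (toL (cfQ S i).1.1 * G).orderTop := by
    refine lt_of_lt_of_le ?_ ((add_le_add (le_orderTop_toL _) hG).trans orderTop_add_le_mul)
    rw [← WithTop.coe_add]
    exact WithTop.coe_lt_coe.2 (by omega)
  rw [orderTop_sub (by rwa [hlead]), hlead]

theorem le_orderTop_toL_mul_remainder_snd_sub (hb : ∀ k < i, cfB S k ≠ 0)
    (hni1 : cfB S i = 0 ∨ n < (cfQ S (i + 1)).1.1.natDegree + (cfQ S (i + 1)).2.1.natDegree)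
    {f : F[X]} (hf0 : f ≠ 0) {G : LaurentSeries F}
    (hG : ((n + 1 - f.natDegree : ℤ) : WithTop ℤ) ≤ G.orderTop) :
    ((n + 1 - (cfQ S i).2.1.natDegree - f.natDegree : ℤ) : WithTop ℤ) ≤
      (toL f * remainder S (cfQ S i).2 - toL (cfQ S i).2.1 * G).orderTop := by
  refine le_trans (le_min ?_ ?_) min_orderTop_le_orderTop_sub <;> rw [orderTop_mul]
  · rw [orderTop_toL hf0]
    calc (((n + 1 - (cfQ S i).2.1.natDegree - f.natDegree : ℤ)) : WithTop ℤ)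
        = ((-f.natDegree : ℤ) : WithTop ℤ) +
            ((n + 1 - (cfQ S i).2.1.natDegree : ℤ) : WithTop ℤ) := by
          rw [← WithTop.coe_add]; congr 1; ring
      _ ≤ _ := add_le_add_right (le_orderTop_remainder_cfQ_snd hb hni1) _
  · refine le_trans ?_ (add_le_add (le_orderTop_toL _) hG)
    rw [← WithTop.coe_add]
    exact WithTop.coe_le_coe.2 (by omega)

theorem exists_eq_sub_of_annihilates (hb : ∀ k < i, cfB S k ≠ 0)
    (hni : (cfQ S i).1.1.natDegree + (cfQ S i).2.1.natDegree ≤ n)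
    (hni1 : cfB S i = 0 ∨ n < (cfQ S (i + 1)).1.1.natDegree + (cfQ S (i + 1)).2.1.natDegree)
    {f : F[X]} (hf : Annihilates n S f) :
    ∃ φ φ' : F[X], φ' ≠ 0 ∧ φ'.natDegree + (cfQ S i).2.1.natDegree = f.natDegree ∧
      (φ = 0 ∨ φ.natDegree + n + 1 ≤ f.natDegree + (cfQ S i).2.1.natDegree) ∧
      f = φ' * (cfQ S i).2.1 - φ * (cfQ S i).1.1 := by
  obtain ⟨hf0, hann⟩ := hf
  obtain ⟨g, hG⟩ := (annCond_iff_exists_le_orderTop n S f).1 hann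
  set ε : F[X] := (-1) ^ i
  have hε : (toL ε).orderTop = 0 := by
    rw [orderTop_toL (pow_ne_zero _ (neg_ne_zero.2 one_ne_zero))]
    simp
  have hε2 : ε * ε = 1 := by rw [← mul_pow, neg_one_mul, neg_neg, one_pow]
  set G := toL f * cfB S 0 - toL g
  set φ' := ε * (f * (cfQ S i).1.2 - g * (cfQ S i).1.1)
  set φ := ε * (f * (cfQ S i).2.2 - g * (cfQ S i).2.1)
  have hφ' : (toL φ').orderTop = (((cfQ S i).2.1.natDegree - f.natDegree : ℤ) : WithTop ℤ) := by
    have h : toL φ' = -toL ε * (toL f * remainder S (cfQ S i).1 - toL (cfQ S i).1.1 * G) := by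
      simp only [φ', G, remainder, toL_mul, toL_sub]
      ring
    rw [h, orderTop_mul, orderTop_neg, hε, zero_add,
      orderTop_toL_mul_remainder_fst_sub hb hni hf0 hG]
  have hφ : ((n + 1 - (cfQ S i).2.1.natDegree - f.natDegree : ℤ) : WithTop ℤ) ≤
      (toL φ).orderTop := by
    have h : toL φ = -toL ε * (toL f * remainder S (cfQ S i).2 - toL (cfQ S i).2.1 * G) := by
      simp only [φ, G, remainder, toL_mul, toL_sub]
      ring
    rw [h, orderTop_mul, orderTop_neg, hε, zero_add]
    exact le_orderTop_toL_mul_remainder_snd_sub hb hni1 hf0 hG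
  have hφ'0 : φ' ≠ 0 := by
    rintro h
    rw [h, toL_zero, orderTop_zero] at hφ'
    exact WithTop.top_ne_coe hφ'
  refine ⟨φ, φ', hφ'0, ?_, ?_, eq_sub_of_det f g (det_cfQ S i) hε2⟩
  · rw [orderTop_toL hφ'0, WithTop.coe_eq_coe] at hφ'
    omega
  · refine (eq_or_ne φ 0).imp id fun h => ?_
    have := natDegree_le_of_le_orderTop_toL h hφ
    omega

theorem LC_eq_natDegree_cfQ (hb : ∀ k < i, cfB S k ≠ 0)
    (hni : (cfQ S i).1.1.natDegree + (cfQ S i).2.1.natDegree ≤ n)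
    (hni1 : cfB S i = 0 ∨ n < (cfQ S (i + 1)).1.1.natDegree + (cfQ S (i + 1)).2.1.natDegree) :
    LC n S = (cfQ S i).2.1.natDegree := by
  have hq := annihilates_of_natDegree_le hb hni hni1 (φ := 0) one_ne_zero (Or.inl rfl)
  simp only [one_mul, zero_mul, sub_zero, natDegree_one, zero_add] at hq
  refine le_antisymm (Nat.sInf_le ⟨_, hq.1, rfl⟩) (le_csInf ⟨_, _, hq.1, rfl⟩ ?_)
  rintro d ⟨f, hf, rfl⟩
  obtain ⟨-, φ', -, hdeg, -⟩ := exists_eq_sub_of_annihilates hb hni hni1 hf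
  omega

end Annihilators

end LinearComplexity

open LinearComplexity

open Polynomial in
theorem annihilators_via_partial_quotients_general {F : Type*} [Field F] (S : ℕ → F)
    (i n : ℕ)
    (hex : cfB S (i - 1) ≠ 0)
    (hni : (cfQ S i).1.1.natDegree + (cfQ S i).2.1.natDegree ≤ n)
    (hni1 : cfB S i = 0 ∨
      n < (cfQ S (i + 1)).1.1.natDegree + (cfQ S (i + 1)).2.1.natDegree) :
    (∀ f₁ : Polynomial F, Annihilates n S f₁ ↔
        ∃ φ φ' : Polynomial F, φ' ≠ 0 ∧
          (φ = 0 ∨ (φ.natDegree : ℤ) ≤ (φ'.natDegree : ℤ) - ((n : ℤ) + 1 - 2 * LC n S)) ∧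
          f₁ = φ' * (cfQ S i).2.1 - φ * (cfQ S i).1.1) ∧
      (∀ f₁ : Polynomial F, (Annihilates n S f₁ ∧ f₁.natDegree = LC n S) ↔
        ∃ φ φ' : Polynomial F, (∃ c : F, c ≠ 0 ∧ φ' = C c) ∧
          (φ = 0 ∨ (φ.natDegree : ℤ) ≤ -((n : ℤ) + 1 - 2 * LC n S)) ∧
          f₁ = φ' * (cfQ S i).2.1 - φ * (cfQ S i).1.1) := by
  have hb : ∀ k < i, cfB S k ≠ 0 := fun k => cfB_ne_zero_of_lt hex
  rw [LC_eq_natDegree_cfQ hb hni hni1]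
  refine ⟨fun f => ⟨fun hf => ?_, ?_⟩, fun f => ⟨fun ⟨hf, hdeg⟩ => ?_, ?_⟩⟩
  · obtain ⟨φ, φ', hφ', hdeg, hφ, rfl⟩ := exists_eq_sub_of_annihilates hb hni hni1 hf
    exact ⟨φ, φ', hφ', hφ.imp_right fun h => by omega, rfl⟩
  · rintro ⟨φ, φ', hφ', hφ, rfl⟩
    exact (annihilates_of_natDegree_le hb hni hni1 hφ' (hφ.imp_right fun h => by omega)).1
  · obtain ⟨φ, φ', hφ', hdeg', hφ, rfl⟩ := exists_eq_sub_of_annihilates hb hni hni1 hf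
    have hφ'C : φ' = C (φ'.coeff 0) := eq_C_of_natDegree_eq_zero (by omega)
    refine ⟨φ, φ', ⟨_, fun h => hφ' (by rw [hφ'C, h, map_zero]), hφ'C⟩,
      hφ.imp_right fun h => by omega, rfl⟩
  · rintro ⟨φ, _, ⟨c, hc, rfl⟩, hφ, rfl⟩
    have h := annihilates_of_natDegree_le hb hni hni1 (C_ne_zero.2 hc)
      (hφ.imp_right fun h => by rw [natDegree_C]; omega)
    exact ⟨h.1, by rw [h.2, natDegree_C, zero_add]⟩

open Polynomial in
/-- For an essential `s = S|n` with `n ∈ [n_i, n_{i+1})`: the nonzero annihilating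
polynomials of `s` are exactly `{φ' q₁ − φ q'₁ : φ' ≠ 0, deg φ ≤ deg φ' − e_s}`, and the
minimal polynomials are exactly `{φ' q₁ − φ q'₁ : φ' ∈ F^×, deg φ ≤ −e_s}`. -/
theorem annihilators_via_partial_quotients {F : Type*} [Field F] (S : ℕ → F)
    (i n : ℕ) (hi : 1 ≤ i) (hn : 2 ≤ n)
    (hex : cfB S (i - 1) ≠ 0)
    (hni : (cfQ S i).1.1.natDegree + (cfQ S i).2.1.natDegree ≤ n)
    (hni1 : cfB S i = 0 ∨
      n < (cfQ S (i + 1)).1.1.natDegree + (cfQ S (i + 1)).2.1.natDegree)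
    (hess : LC 1 S < LC n S) :
    (∀ f₁ : Polynomial F, Annihilates n S f₁ ↔
        ∃ φ φ' : Polynomial F, φ' ≠ 0 ∧
          (φ = 0 ∨ (φ.natDegree : ℤ) ≤ (φ'.natDegree : ℤ) - ((n : ℤ) + 1 - 2 * LC n S)) ∧
          f₁ = φ' * (cfQ S i).2.1 - φ * (cfQ S i).1.1) ∧
      (∀ f₁ : Polynomial F, (Annihilates n S f₁ ∧ f₁.natDegree = LC n S) ↔
        ∃ φ φ' : Polynomial F, (∃ c : F, c ≠ 0 ∧ φ' = C c) ∧
          (φ = 0 ∨ (φ.natDegree : ℤ) ≤ -((n : ℤ) + 1 - 2 * LC n S)) ∧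
          f₁ = φ' * (cfQ S i).2.1 - φ * (cfQ S i).1.1) :=
  annihilators_via_partial_quotients_general S i n hex hni hni1
end

section
/- Let F be a field, S a linear recurring sequence over F whose ideal of characteristic polynomials is Id_S = g_1·F[x] with g_1 monic, and let g_2 be defined by x g_2 = [g_1·S̄]. Let n ≥ 2·deg g_1 and s = S|n. Then (g_1, g_2) is a minimal solution for s, and every minimal solution for s equals c·(g_1, g_2) for some c ∈ F^×. Moreover S̄ = x g_2 / g_1, so S is determined by its first 2·deg g_1 terms. -/
/-- `φ` is a characteristic polynomial of the infinite sequence `S`: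
`(φ·S̄)_i = 0` for all `i ≤ 0` (i.e. all coefficients at nonpositive `x`-degrees vanish). -/
def IsCharPoly {F : Type*} [Field F] (S : ℕ → F) (φ : Polynomial F) : Prop :=
  ∀ k : ℤ, 0 ≤ k → (toL φ * sbar S).coeff k = 0

/-! The minimal polynomial `g₁` of `S` acts on sequences by `(g₁ ⋆ u)ₜ = Σⱼ g₁ⱼ u_{t+j}`, and a
monic recurrence of degree `d` forces a sequence vanishing on its first `N ≥ d` terms to vanish.
If `φ` annihilates `S|n` with `deg g₁ + deg φ ≤ n`, then `φ ⋆ S` satisfies the recurrence `g₁` and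
vanishes on its first `deg g₁` terms, so `φ` is a characteristic polynomial of `S` and `g₁ ∣ φ`.
With `n ≥ 2 deg g₁` this makes `g₁` the minimal annihilator of `S|n`, unique up to a scalar, and
the numerator `g₂` is read off from `g₁` coefficientwise. For uniqueness of `S`, `g₁ ⋆ T` satisfies
the recurrence of `T` and agrees with `g₁ ⋆ S = 0` on its first `deg g₁` terms, so it vanishes;
then `T - S` satisfies `g₁` and vanishes on its first `2 deg g₁` terms. -/

open Polynomial HahnSeries Finset

namespace LinearRecurring

section CommRing

variable {D : Type*} [CommRing D]

/-- `shiftAction p u t` is the coefficient of `x⁻ᵗ` in `p·ū`. -/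
def shiftAction (p : D[X]) (u : ℕ → D) (t : ℕ) : D :=
  ∑ j ∈ range (p.natDegree + 1), p.coeff j * u (t + j)

theorem shiftAction_zero (p : D[X]) : shiftAction p (0 : ℕ → D) = 0 := by
  ext t
  simp only [shiftAction, Pi.zero_apply, mul_zero, sum_const_zero]

theorem shiftAction_sub (p : D[X]) (u v : ℕ → D) :
    shiftAction p (u - v) = shiftAction p u - shiftAction p v := by
  ext t
  simp only [shiftAction, Pi.sub_apply, mul_sub, sum_sub_distrib]

theorem shiftAction_comm (p q : D[X]) (u : ℕ → D) :
    shiftAction p (shiftAction q u) = shiftAction q (shiftAction p u) := by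
  ext t
  simp only [shiftAction, mul_sum]
  rw [sum_comm]
  refine sum_congr rfl fun j _ => sum_congr rfl fun i _ => ?_
  rw [add_right_comm]
  ring

theorem shiftAction_congr (p : D[X]) {u v : ℕ → D} {t : ℕ}
    (huv : ∀ j ≤ p.natDegree, u (t + j) = v (t + j)) :
    shiftAction p u t = shiftAction p v t :=
  sum_congr rfl fun j hj => by rw [huv j (Nat.lt_succ_iff.mp (mem_range.mp hj))]

theorem _root_.Polynomial.Monic.eq_zero_of_shiftAction_eq_zero {p : D[X]} (hp : p.Monic)
    {u : ℕ → D} (hu : shiftAction p u = 0) {N : ℕ} (hN : p.natDegree ≤ N)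
    (hinit : ∀ t < N, u t = 0) : u = 0 := by
  suffices ∀ t, u t = 0 from funext this
  intro t
  induction t using Nat.strong_induction_on with
  | _ t ih =>
    rcases lt_or_ge t N with ht | ht
    · exact hinit t ht
    -- the recurrence at `t - deg p` expresses `u t` through earlier terms, which all vanish
    have hrec := congrFun hu (t - p.natDegree)
    rw [shiftAction, sum_range_succ, Nat.sub_add_cancel (hN.trans ht), hp.coeff_natDegree,
      one_mul, sum_eq_zero fun i hi => by rw [ih _ (by simp at hi; omega), mul_zero],
      zero_add] at hrec
    exact hrec

theorem shiftAction_eq_zero_of_annCond {g φ : D[X]} (hg : g.Monic) {u : ℕ → D}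
    (hgu : shiftAction g u = 0) {n : ℕ} (hφ : AnnCond n u φ)
    (hdeg : g.natDegree + φ.natDegree ≤ n) : shiftAction φ u = 0 :=
  hg.eq_zero_of_shiftAction_eq_zero (by rw [shiftAction_comm, hgu, shiftAction_zero])
    le_rfl fun t ht => hφ t (by omega)

theorem eq_of_shiftAction_eq_zero {g h : D[X]} (hg : g.Monic) (hh : h.Monic) {u v : ℕ → D}
    (hgu : shiftAction g u = 0) (hhv : shiftAction h v = 0) (hdeg : h.natDegree ≤ g.natDegree)
    (hinit : ∀ k < 2 * g.natDegree, v k = u k) : v = u := by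
  have hgv : shiftAction g v = 0 := by
    refine hh.eq_zero_of_shiftAction_eq_zero (by rw [shiftAction_comm, hhv, shiftAction_zero])
      hdeg fun t ht => ?_
    rw [shiftAction_congr g fun j hj => hinit (t + j) (by omega)]
    exact congrFun hgu t
  refine sub_eq_zero.mp (hg.eq_zero_of_shiftAction_eq_zero ?_ (N := 2 * g.natDegree) (by omega)
    fun t ht => sub_eq_zero.mpr (hinit t ht))
  rw [shiftAction_sub, hgv, hgu, sub_zero]

theorem lc_eq_natDegree {n : ℕ} {s : ℕ → D} {g : D[X]} (hg : Annihilates n s g)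
    (hmin : ∀ φ, Annihilates n s φ → g.natDegree ≤ φ.natDegree) : LC n s = g.natDegree :=
  le_antisymm (Nat.sInf_le ⟨g, hg, rfl⟩)
    (le_csInf ⟨_, g, hg, rfl⟩ fun _ ⟨φ, hφ, hd⟩ => hd ▸ hmin φ hφ)

theorem SeqNum.eq_C_mul [NoZeroDivisors D] {n : ℕ} {s : ℕ → D} {φ ψ ψ' : D[X]} {c : D}
    (hc : c ≠ 0) (h : SeqNum n s (C c * φ) ψ) (h' : SeqNum n s φ ψ') : ψ = C c * ψ' := by
  ext k
  rw [h k, coeff_C_mul, h' k, natDegree_C_mul hc, mul_sum]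
  refine sum_congr rfl fun j _ => ?_
  split_ifs
  · rw [coeff_C_mul, mul_assoc]
  · rw [mul_zero]

end CommRing

section Field

variable {F : Type*} [Field F]

theorem sbar_coeff_natCast (S : ℕ → F) (k : ℕ) : (sbar S).coeff (k : ℤ) = S k := by
  rw [sbar, ofPowerSeries_apply_coeff, PowerSeries.coeff_mk]

theorem sbar_coeff_of_neg (S : ℕ → F) {e : ℤ} (he : e < 0) : (sbar S).coeff e = 0 := by
  rw [sbar, ofPowerSeries_apply]
  refine embDomain_of_notMem_range fun ⟨m, hm⟩ => ?_
  have : ((m : ℕ) : ℤ) = e := hm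
  omega

theorem toL_coeff_neg_natCast (p : F[X]) (m : ℕ) : (toL p).coeff (-(m : ℤ)) = p.coeff m := by
  simp only [toL, HahnSeries.coeff_sum, coeff_single, neg_inj, Nat.cast_inj, sum_ite_eq, mem_range]
  split_ifs with h
  · rfl
  · exact (coeff_eq_zero_of_natDegree_lt (by omega)).symm

theorem toL_coeff_of_pos (p : F[X]) {e : ℤ} (he : 0 < e) : (toL p).coeff e = 0 := by
  simp only [toL, HahnSeries.coeff_sum]
  exact sum_eq_zero fun k _ => coeff_single_of_ne (by omega)

theorem toL_mul_sbar_coeff (p : F[X]) (S : ℕ → F) (e : ℤ) :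
    (toL p * sbar S).coeff e =
      ∑ j ∈ range (p.natDegree + 1), if 0 ≤ e + j then p.coeff j * S (e + j).toNat else 0 := by
  rw [toL, sum_mul, HahnSeries.coeff_sum]
  refine sum_congr rfl fun j _ => ?_
  have hshift := coeff_single_mul_add (r := p.coeff j) (x := sbar S) (a := e + j) (b := -(j : ℤ))
  rw [add_neg_cancel_right] at hshift
  rw [hshift]
  split_ifs with h
  · rw [← sbar_coeff_natCast S, Int.toNat_of_nonneg h]
  · rw [sbar_coeff_of_neg _ (by omega), mul_zero]

theorem toL_mul_sbar_coeff_natCast (p : F[X]) (S : ℕ → F) (t : ℕ) :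
    (toL p * sbar S).coeff (t : ℤ) = shiftAction p S t := by
  rw [toL_mul_sbar_coeff]
  refine sum_congr rfl fun j _ => ?_
  rw [if_pos (by positivity), show ((t : ℤ) + j).toNat = t + j by omega]

theorem isCharPoly_iff_shiftAction_eq_zero (S : ℕ → F) (p : F[X]) :
    IsCharPoly S p ↔ shiftAction p S = 0 := by
  refine ⟨fun h => funext fun t => ?_, fun h k hk => ?_⟩
  · rw [← toL_mul_sbar_coeff_natCast]
    exact h t (by positivity)
  · lift k to ℕ using hk
    rw [toL_mul_sbar_coeff_natCast, h, Pi.zero_apply]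

theorem seqNum_of_isPosPart {S : ℕ → F} {φ ψ : F[X]} (hψ : IsPosPart (toL φ * sbar S) ψ)
    {n : ℕ} (hn : φ.natDegree ≤ n) : SeqNum n S φ ψ := by
  intro k
  rw [hψ k, toL_mul_sbar_coeff]
  refine sum_congr rfl fun j hj => ?_
  have hj : j ≤ φ.natDegree := Nat.lt_succ_iff.mp (mem_range.mp hj)
  by_cases hkj : k + 1 ≤ j
  · rw [if_pos (by omega), if_pos ⟨hkj, by omega⟩, show (-(k + 1 : ℤ) + j).toNat = j - (k + 1) by
      omega]
  · rw [if_neg (by omega), if_neg fun h => hkj h.1]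

theorem toL_mul_sbar_eq {S : ℕ → F} {φ ψ : F[X]} (hφ : IsCharPoly S φ)
    (hψ : IsPosPart (toL φ * sbar S) ψ) : toL φ * sbar S = toL (X * ψ) := by
  ext e
  rcases le_or_gt 0 e with he | he
  · rw [hφ e he]
    rcases he.lt_or_eq with he | rfl
    · rw [toL_coeff_of_pos _ he]
    · rw [← coeff_X_mul_zero ψ, ← toL_coeff_neg_natCast, Nat.cast_zero, neg_zero]
  · obtain ⟨k, rfl⟩ : ∃ k : ℕ, e = -(k + 1 : ℤ) := ⟨(-e - 1).toNat, by omega⟩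
    rw [← hψ k, ← coeff_X_mul, ← toL_coeff_neg_natCast, Nat.cast_succ]

variable {S : ℕ → F} {g : F[X]} (hg : g.Monic) (hId : ∀ φ : F[X], IsCharPoly S φ ↔ g ∣ φ)
include hg hId

theorem dvd_of_annCond {n : ℕ} {φ : F[X]} (hφ : AnnCond n S φ)
    (hdeg : g.natDegree + φ.natDegree ≤ n) : g ∣ φ := by
  rw [← hId, isCharPoly_iff_shiftAction_eq_zero]
  exact shiftAction_eq_zero_of_annCond hg
    ((isCharPoly_iff_shiftAction_eq_zero S g).mp ((hId g).mpr dvd_rfl)) hφ hdeg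

theorem natDegree_le_of_annihilates {n : ℕ} (hn : 2 * g.natDegree ≤ n) {φ : F[X]}
    (hφ : Annihilates n S φ) : g.natDegree ≤ φ.natDegree := by
  by_contra! hlt
  exact hlt.not_ge (natDegree_le_of_dvd (dvd_of_annCond hg hId hφ.2 (by omega)) hφ.1)

end Field

end LinearRecurring

open LinearRecurring in
open Polynomial in
theorem linearRecurring_minimal_solution_general {F : Type*} [Field F] (S : ℕ → F)
    (g₁ g₂ : Polynomial F) (hmonic : g₁.Monic)
    (hId : ∀ φ : Polynomial F, IsCharPoly S φ ↔ g₁ ∣ φ)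
    (hg₂ : IsPosPart (toL g₁ * sbar S) g₂)
    (n : ℕ) (h2d : 2 * g₁.natDegree ≤ n) :
    (IsSolution n S g₁ g₂ ∧ g₁.natDegree = LC n S) ∧
      (∀ f₁ f₂ : Polynomial F, IsSolution n S f₁ f₂ → f₁.natDegree = LC n S →
        ∃ c : F, c ≠ 0 ∧ f₁ = C c * g₁ ∧ f₂ = C c * g₂) ∧
      toL g₁ * sbar S = toL (X * g₂) ∧
      (∀ (T : ℕ → F) (h₁ : Polynomial F), h₁.Monic →
        (∀ φ : Polynomial F, IsCharPoly T φ ↔ h₁ ∣ φ) →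
        h₁.natDegree ≤ g₁.natDegree →
        (∀ k < 2 * g₁.natDegree, T k = S k) → ∀ k, T k = S k) := by
  have hchar : IsCharPoly S g₁ := (hId g₁).mpr dvd_rfl
  have hg₁S : shiftAction g₁ S = 0 := (isCharPoly_iff_shiftAction_eq_zero S g₁).mp hchar
  have hsol : IsSolution n S g₁ g₂ :=
    ⟨⟨hmonic.ne_zero, fun t _ => congrFun hg₁S t⟩, seqNum_of_isPosPart hg₂ (by omega)⟩
  have hLC : LC n S = g₁.natDegree :=
    lc_eq_natDegree hsol.1 fun φ hφ => natDegree_le_of_annihilates hmonic hId h2d hφ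
  refine ⟨⟨hsol, hLC.symm⟩, fun f₁ f₂ hf hdeg => ?_, toL_mul_sbar_eq hchar hg₂,
    fun T h₁ hh₁ hIdT hdeg hinit => ?_⟩
  · have hdvd : g₁ ∣ f₁ := dvd_of_annCond hmonic hId hf.1.2 (by omega)
    have hf₁ := eq_leadingCoeff_mul_of_monic_of_dvd_of_natDegree_le hmonic hdvd (by omega)
    have hc : f₁.leadingCoeff ≠ 0 := leadingCoeff_ne_zero.mpr hf.1.1
    exact ⟨_, hc, hf₁, SeqNum.eq_C_mul hc (hf₁ ▸ hf.2) hsol.2⟩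
  · have hh₁T := (isCharPoly_iff_shiftAction_eq_zero T h₁).mp ((hIdT h₁).mpr dvd_rfl)
    exact congrFun (eq_of_shiftAction_eq_zero hmonic hh₁ hg₁S hh₁T hdeg hinit)

open Polynomial in
/-- For a linear recurring sequence `S` with `Id_S = g₁·F[x]`, `g₁` monic,
`x g₂ = [g₁·S̄]`, and `n ≥ 2 deg g₁`: `(g₁,g₂)` is a minimal solution for `S|n`, every
minimal solution is a nonzero scalar multiple of it, `S̄ = x g₂ / g₁`, and `S` is
determined by its first `2 deg g₁` terms. -/
theorem linearRecurring_minimal_solution {F : Type*} [Field F] (S : ℕ → F)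
    (g₁ g₂ : Polynomial F) (hmonic : g₁.Monic)
    (hId : ∀ φ : Polynomial F, IsCharPoly S φ ↔ g₁ ∣ φ)
    (hg₂ : IsPosPart (toL g₁ * sbar S) g₂)
    (n : ℕ) (hn : 1 ≤ n) (h2d : 2 * g₁.natDegree ≤ n) :
    (IsSolution n S g₁ g₂ ∧ g₁.natDegree = LC n S) ∧
      (∀ f₁ f₂ : Polynomial F, IsSolution n S f₁ f₂ → f₁.natDegree = LC n S →
        ∃ c : F, c ≠ 0 ∧ f₁ = C c * g₁ ∧ f₂ = C c * g₂) ∧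
      toL g₁ * sbar S = toL (X * g₂) ∧
      (∀ (T : ℕ → F) (h₁ : Polynomial F), h₁.Monic →
        (∀ φ : Polynomial F, IsCharPoly T φ ↔ h₁ ∣ φ) →
        h₁.natDegree ≤ g₁.natDegree →
        (∀ k < 2 * g₁.natDegree, T k = S k) → ∀ k, T k = S k) :=
  linearRecurring_minimal_solution_general S g₁ g₂ hmonic hId hg₂ n h2d
end
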